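/- arXiv:1204.0719 — 9 statements merged into one kernel-verified Lean document; each statement's English description precedes it below -/
import Mathlib

section
/- Let n ≥ 1 and let X₁, X₂, X₃ be invertible real n×n matrices. Define the 2n×2n real block matrices c₁ = [[X₁, 0], [X₁ + X₂⁻¹X₃ᵀ, (X₁ᵀ)⁻¹]], c₂ = [[−X₃⁻¹X₁ᵀ − X₂ − (X₂ᵀ)⁻¹, X₂ + X₃⁻¹X₁ᵀ], [−X₃⁻¹X₁ᵀ − (X₂ᵀ)⁻¹, X₃⁻¹X₁ᵀ]], and c₃ = [[(X₃ᵀ)⁻¹, −(X₃ᵀ)⁻¹ − X₁⁻¹X₂ᵀ], [0, X₃]]. Then c₃·c₂·c₁ equals the 2n×2n identity matrix if and only if the matrix X₃(X₂ᵀ)⁻¹X₁ is symmetric; moreover, if X₃(X₂ᵀ)⁻¹X₁ is symmetric then c₁, c₂ and c₃ all belong to Sp(2n,ℝ). -/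
open Matrix

/-- The standard symplectic form matrix `J = [[0, 1], [-1, 0]]` in `2n × 2n` block form. -/
def Jmat (n : ℕ) : Matrix (Fin n ⊕ Fin n) (Fin n ⊕ Fin n) ℝ :=
  Matrix.fromBlocks 0 1 (-1) 0

/-- Membership in the real symplectic group `Sp(2n, ℝ)`: `gᵀ J g = J`. -/
def IsSymplectic {n : ℕ} (g : Matrix (Fin n ⊕ Fin n) (Fin n ⊕ Fin n) ℝ) : Prop :=
  gᵀ * Jmat n * g = Jmat n

private lemma symp_mul {n : ℕ} {g h : Matrix (Fin n ⊕ Fin n) (Fin n ⊕ Fin n) ℝ}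
    (hg : IsSymplectic g) (hh : IsSymplectic h) : IsSymplectic (g * h) := by
  unfold IsSymplectic at *
  rw [transpose_mul, show hᵀ * gᵀ * Jmat n * (g * h) = hᵀ * (gᵀ * Jmat n * g) * h by
    noncomm_ring, hg, hh]

private lemma symp_inv {n : ℕ} {g : Matrix (Fin n ⊕ Fin n) (Fin n ⊕ Fin n) ℝ}
    (hu : IsUnit g.det) (hg : IsSymplectic g) : IsSymplectic g⁻¹ := by
  have hu' : IsUnit gᵀ.det := by rwa [det_transpose]
  unfold IsSymplectic at *
  rw [Matrix.transpose_nonsing_inv]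
  calc gᵀ⁻¹ * Jmat n * g⁻¹ = gᵀ⁻¹ * (gᵀ * Jmat n * g) * g⁻¹ := by rw [hg]
    _ = Jmat n := by
        simp [mul_assoc, Matrix.mul_nonsing_inv _ hu, Matrix.nonsing_inv_mul_cancel_left _ _ hu']

theorem stmt0 (n : ℕ) (hn : 1 ≤ n) (X₁ X₂ X₃ : Matrix (Fin n) (Fin n) ℝ)
    (h1 : IsUnit X₁) (h2 : IsUnit X₂) (h3 : IsUnit X₃) :
    let c₁ := Matrix.fromBlocks X₁ 0 (X₁ + X₂⁻¹ * X₃ᵀ) X₁ᵀ⁻¹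
    let c₂ := Matrix.fromBlocks (-(X₃⁻¹ * X₁ᵀ) - X₂ - X₂ᵀ⁻¹) (X₂ + X₃⁻¹ * X₁ᵀ)
        (-(X₃⁻¹ * X₁ᵀ) - X₂ᵀ⁻¹) (X₃⁻¹ * X₁ᵀ)
    let c₃ := Matrix.fromBlocks X₃ᵀ⁻¹ (-X₃ᵀ⁻¹ - X₁⁻¹ * X₂ᵀ) 0 X₃
    (c₃ * c₂ * c₁ = 1 ↔ (X₃ * X₂ᵀ⁻¹ * X₁).IsSymm) ∧
      ((X₃ * X₂ᵀ⁻¹ * X₁).IsSymm →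
        IsSymplectic c₁ ∧ IsSymplectic c₂ ∧ IsSymplectic c₃) := by
  intro c₁ c₂ c₃
  have d1 : IsUnit X₁.det := (isUnit_iff_isUnit_det _).mp h1
  have d2 : IsUnit X₂.det := (isUnit_iff_isUnit_det _).mp h2
  have d3 : IsUnit X₃.det := (isUnit_iff_isUnit_det _).mp h3
  have d1t : IsUnit X₁ᵀ.det := by rwa [det_transpose]
  have d2t : IsUnit X₂ᵀ.det := by rwa [det_transpose]
  have d3t : IsUnit X₃ᵀ.det := by rwa [det_transpose]
  -- the big product
  have key : c₃ * c₂ * c₁ =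
      Matrix.fromBlocks (1 + 1 - X₁⁻¹ * (X₂ᵀ * (X₃⁻¹ * (X₁ᵀ * (X₂⁻¹ * X₃ᵀ)))))
        (X₃ᵀ⁻¹ * (X₂ * X₁ᵀ⁻¹) - X₁⁻¹ * (X₂ᵀ * X₃⁻¹))
        (X₁ᵀ * (X₂⁻¹ * X₃ᵀ) - X₃ * (X₂ᵀ⁻¹ * X₁)) 1 := by
    show Matrix.fromBlocks X₃ᵀ⁻¹ (-X₃ᵀ⁻¹ - X₁⁻¹ * X₂ᵀ) 0 X₃ *
      Matrix.fromBlocks (-(X₃⁻¹ * X₁ᵀ) - X₂ - X₂ᵀ⁻¹) (X₂ + X₃⁻¹ * X₁ᵀ)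
        (-(X₃⁻¹ * X₁ᵀ) - X₂ᵀ⁻¹) (X₃⁻¹ * X₁ᵀ) *
      Matrix.fromBlocks X₁ 0 (X₁ + X₂⁻¹ * X₃ᵀ) X₁ᵀ⁻¹ = _
    simp only [Matrix.fromBlocks_multiply, mul_add, add_mul, sub_mul, mul_sub, neg_mul, mul_neg,
      mul_assoc, Matrix.mul_zero, Matrix.zero_mul, add_zero, zero_add, mul_one, one_mul,
      Matrix.mul_nonsing_inv _ d1, Matrix.mul_nonsing_inv _ d2, Matrix.mul_nonsing_inv _ d3,
      Matrix.nonsing_inv_mul _ d1, Matrix.nonsing_inv_mul _ d2, Matrix.nonsing_inv_mul _ d3,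
      Matrix.mul_nonsing_inv _ d1t, Matrix.mul_nonsing_inv _ d2t, Matrix.mul_nonsing_inv _ d3t,
      Matrix.nonsing_inv_mul _ d1t, Matrix.nonsing_inv_mul _ d2t, Matrix.nonsing_inv_mul _ d3t,
      Matrix.mul_nonsing_inv_cancel_left _ _ d1, Matrix.mul_nonsing_inv_cancel_left _ _ d2,
      Matrix.mul_nonsing_inv_cancel_left _ _ d3, Matrix.mul_nonsing_inv_cancel_left _ _ d1t,
      Matrix.mul_nonsing_inv_cancel_left _ _ d2t, Matrix.mul_nonsing_inv_cancel_left _ _ d3t,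
      Matrix.nonsing_inv_mul_cancel_left _ _ d1, Matrix.nonsing_inv_mul_cancel_left _ _ d2,
      Matrix.nonsing_inv_mul_cancel_left _ _ d3, Matrix.nonsing_inv_mul_cancel_left _ _ d1t,
      Matrix.nonsing_inv_mul_cancel_left _ _ d2t, Matrix.nonsing_inv_mul_cancel_left _ _ d3t]
    rw [Matrix.fromBlocks_inj]
    refine ⟨?_, ?_, ?_, ?_⟩ <;> abel
  -- reformulation of the symmetry condition
  have hsymm_iff : (X₃ * X₂ᵀ⁻¹ * X₁).IsSymm ↔
      X₁ᵀ * (X₂⁻¹ * X₃ᵀ) = X₃ * (X₂ᵀ⁻¹ * X₁) := by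
    rw [Matrix.IsSymm]
    simp only [transpose_mul, Matrix.transpose_nonsing_inv, transpose_transpose, mul_assoc]
  have prod_iff : c₃ * c₂ * c₁ = 1 ↔ (X₃ * X₂ᵀ⁻¹ * X₁).IsSymm := by
    rw [key, hsymm_iff, ← Matrix.fromBlocks_one, Matrix.fromBlocks_inj]
    constructor
    · rintro ⟨-, -, hq, -⟩
      exact sub_eq_zero.mp hq
    · intro h
      have hinv := congrArg Inv.inv h
      simp only [Matrix.mul_inv_rev, Matrix.nonsing_inv_nonsing_inv _ d2,
        Matrix.nonsing_inv_nonsing_inv _ d2t, mul_assoc] at hinv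
      refine ⟨?_, sub_eq_zero.mpr hinv, sub_eq_zero.mpr h, rfl⟩
      rw [h, Matrix.nonsing_inv_mul_cancel_left _ _ d3,
        Matrix.mul_nonsing_inv_cancel_left _ _ d2t, Matrix.nonsing_inv_mul _ d1]
      abel
  refine ⟨prod_iff, fun hs => ?_⟩
  have h : X₁ᵀ * (X₂⁻¹ * X₃ᵀ) = X₃ * (X₂ᵀ⁻¹ * X₁) := hsymm_iff.mp hs
  have s1 : IsSymplectic c₁ := by
    unfold IsSymplectic
    show (Matrix.fromBlocks X₁ 0 (X₁ + X₂⁻¹ * X₃ᵀ) X₁ᵀ⁻¹)ᵀ * Jmat n *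
      Matrix.fromBlocks X₁ 0 (X₁ + X₂⁻¹ * X₃ᵀ) X₁ᵀ⁻¹ = Jmat n
    rw [Jmat]
    simp only [Matrix.fromBlocks_transpose, Matrix.fromBlocks_multiply, transpose_add,
      transpose_mul, Matrix.transpose_nonsing_inv, transpose_transpose, transpose_zero,
      mul_add, add_mul, sub_mul, mul_sub, neg_mul, mul_neg,
      mul_assoc, Matrix.mul_zero, Matrix.zero_mul, add_zero, zero_add, mul_one, one_mul,
      Matrix.mul_nonsing_inv _ d1, Matrix.mul_nonsing_inv _ d2, Matrix.mul_nonsing_inv _ d3,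
      Matrix.nonsing_inv_mul _ d1, Matrix.nonsing_inv_mul _ d2, Matrix.nonsing_inv_mul _ d3,
      Matrix.mul_nonsing_inv _ d1t, Matrix.mul_nonsing_inv _ d2t, Matrix.mul_nonsing_inv _ d3t,
      Matrix.nonsing_inv_mul _ d1t, Matrix.nonsing_inv_mul _ d2t, Matrix.nonsing_inv_mul _ d3t,
      Matrix.mul_nonsing_inv_cancel_left _ _ d1, Matrix.mul_nonsing_inv_cancel_left _ _ d2,
      Matrix.mul_nonsing_inv_cancel_left _ _ d3, Matrix.mul_nonsing_inv_cancel_left _ _ d1t,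
      Matrix.mul_nonsing_inv_cancel_left _ _ d2t, Matrix.mul_nonsing_inv_cancel_left _ _ d3t,
      Matrix.nonsing_inv_mul_cancel_left _ _ d1, Matrix.nonsing_inv_mul_cancel_left _ _ d2,
      Matrix.nonsing_inv_mul_cancel_left _ _ d3, Matrix.nonsing_inv_mul_cancel_left _ _ d1t,
      Matrix.nonsing_inv_mul_cancel_left _ _ d2t, Matrix.nonsing_inv_mul_cancel_left _ _ d3t, h]
    rw [Matrix.fromBlocks_inj]
    refine ⟨?_, ?_, ?_, ?_⟩ <;> abel
  have s3 : IsSymplectic c₃ := by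
    unfold IsSymplectic
    show (Matrix.fromBlocks X₃ᵀ⁻¹ (-X₃ᵀ⁻¹ - X₁⁻¹ * X₂ᵀ) 0 X₃)ᵀ * Jmat n *
      Matrix.fromBlocks X₃ᵀ⁻¹ (-X₃ᵀ⁻¹ - X₁⁻¹ * X₂ᵀ) 0 X₃ = Jmat n
    have hinv := congrArg Inv.inv h
    simp only [Matrix.mul_inv_rev, Matrix.nonsing_inv_nonsing_inv _ d2,
      Matrix.nonsing_inv_nonsing_inv _ d2t, mul_assoc] at hinv
    have hinv2 : X₃ᵀ * (X₁⁻¹ * X₂ᵀ) = X₂ * (X₁ᵀ⁻¹ * X₃) := by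
      have h4 := congrArg (fun M => X₃ᵀ * M * X₃) hinv
      simp only [mul_assoc, Matrix.mul_nonsing_inv_cancel_left _ _ d3t,
        Matrix.nonsing_inv_mul _ d3, mul_one] at h4
      exact h4.symm
    rw [Jmat]
    simp only [Matrix.fromBlocks_transpose, Matrix.fromBlocks_multiply, transpose_add,
      transpose_sub, transpose_neg, transpose_mul, Matrix.transpose_nonsing_inv,
      transpose_transpose, transpose_zero,
      mul_add, add_mul, sub_mul, mul_sub, neg_mul, mul_neg,
      mul_assoc, Matrix.mul_zero, Matrix.zero_mul, add_zero, zero_add, mul_one, one_mul,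
      Matrix.mul_nonsing_inv _ d1, Matrix.mul_nonsing_inv _ d2, Matrix.mul_nonsing_inv _ d3,
      Matrix.nonsing_inv_mul _ d1, Matrix.nonsing_inv_mul _ d2, Matrix.nonsing_inv_mul _ d3,
      Matrix.mul_nonsing_inv _ d1t, Matrix.mul_nonsing_inv _ d2t, Matrix.mul_nonsing_inv _ d3t,
      Matrix.nonsing_inv_mul _ d1t, Matrix.nonsing_inv_mul _ d2t, Matrix.nonsing_inv_mul _ d3t,
      Matrix.mul_nonsing_inv_cancel_left _ _ d1, Matrix.mul_nonsing_inv_cancel_left _ _ d2,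
      Matrix.mul_nonsing_inv_cancel_left _ _ d3, Matrix.mul_nonsing_inv_cancel_left _ _ d1t,
      Matrix.mul_nonsing_inv_cancel_left _ _ d2t, Matrix.mul_nonsing_inv_cancel_left _ _ d3t,
      Matrix.nonsing_inv_mul_cancel_left _ _ d1, Matrix.nonsing_inv_mul_cancel_left _ _ d2,
      Matrix.nonsing_inv_mul_cancel_left _ _ d3, Matrix.nonsing_inv_mul_cancel_left _ _ d1t,
      Matrix.nonsing_inv_mul_cancel_left _ _ d2t, Matrix.nonsing_inv_mul_cancel_left _ _ d3t, hinv, hinv2]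
    rw [Matrix.fromBlocks_inj]
    refine ⟨?_, ?_, ?_, ?_⟩ <;> abel
  have hprod : c₃ * c₂ * c₁ = 1 := prod_iff.mpr hs
  have dc1 : IsUnit c₁.det := by
    show IsUnit (Matrix.fromBlocks X₁ 0 (X₁ + X₂⁻¹ * X₃ᵀ) X₁ᵀ⁻¹).det
    rw [Matrix.det_fromBlocks_zero₁₂]
    exact d1.mul (Matrix.isUnit_nonsing_inv_det _ d1t)
  have dc3 : IsUnit c₃.det := by
    show IsUnit (Matrix.fromBlocks X₃ᵀ⁻¹ (-X₃ᵀ⁻¹ - X₁⁻¹ * X₂ᵀ) 0 X₃).det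
    rw [Matrix.det_fromBlocks_zero₂₁]
    exact (Matrix.isUnit_nonsing_inv_det _ d3t).mul d3
  have hc3inv : c₃⁻¹ = c₂ * c₁ := Matrix.inv_eq_right_inv (by rw [← mul_assoc]; exact hprod)
  have hc2 : c₂ = c₃⁻¹ * c₁⁻¹ := by
    rw [hc3inv, Matrix.mul_nonsing_inv_cancel_right _ _ dc1]
  rw [hc2]
  exact ⟨s1, symp_mul (symp_inv dc3 s3) (symp_inv dc1 s1), s3⟩
end

section
/- Let n = k + l and let A be an invertible real n×n matrix of block form A = [[A₁, A₂], [0, A₄]] where A₁ is k×k (so A₁ and A₄ are invertible). Let S be a symmetric positive definite real n×n matrix with block decomposition S = [[S₁, S₂], [S₃, S₄]], S₁ being k×k. If Y₁ is a symmetric real k×k matrix satisfying Y₁(A₁ + (A₁ᵀ)⁻¹S₁)Y₁ + Y₁(A₁ᵀ)⁻¹ − A₁Y₁ = 0, then the n×n matrix Y = [[Y₁, 0], [0, 0]] satisfies Y(A + (Aᵀ)⁻¹S)Y + Y(Aᵀ)⁻¹ − AY = 0. -/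
open Matrix

theorem stmt2 (k l : ℕ)
    (A₁ : Matrix (Fin k) (Fin k) ℝ) (A₂ : Matrix (Fin k) (Fin l) ℝ)
    (A₄ : Matrix (Fin l) (Fin l) ℝ)
    (S₁ : Matrix (Fin k) (Fin k) ℝ) (S₂ : Matrix (Fin k) (Fin l) ℝ)
    (S₃ : Matrix (Fin l) (Fin k) ℝ) (S₄ : Matrix (Fin l) (Fin l) ℝ)
    (A : Matrix (Fin k ⊕ Fin l) (Fin k ⊕ Fin l) ℝ)
    (hA : A = Matrix.fromBlocks A₁ A₂ 0 A₄)
    (hAinv : IsUnit A)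
    (S : Matrix (Fin k ⊕ Fin l) (Fin k ⊕ Fin l) ℝ)
    (hS : S = Matrix.fromBlocks S₁ S₂ S₃ S₄)
    (hSpd : S.PosDef)
    (Y₁ : Matrix (Fin k) (Fin k) ℝ) (hY₁ : Y₁.IsSymm)
    (hfix : Y₁ * (A₁ + A₁ᵀ⁻¹ * S₁) * Y₁ + Y₁ * A₁ᵀ⁻¹ - A₁ * Y₁ = 0) :
    (Matrix.fromBlocks Y₁ 0 0 0) * (A + Aᵀ⁻¹ * S) * (Matrix.fromBlocks Y₁ 0 0 0)
      + (Matrix.fromBlocks Y₁ 0 0 0) * Aᵀ⁻¹ - A * (Matrix.fromBlocks Y₁ 0 0 0) = 0 := by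
  subst hA hS
  rw [isUnit_fromBlocks_zero₂₁] at hAinv
  obtain ⟨h1, h4⟩ := hAinv
  have hT : (fromBlocks A₁ A₂ 0 A₄)ᵀ⁻¹ =
      fromBlocks A₁ᵀ⁻¹ 0 (-(A₄ᵀ⁻¹ * A₂ᵀ * A₁ᵀ⁻¹)) A₄ᵀ⁻¹ := by
    rw [fromBlocks_transpose, transpose_zero,
      inv_fromBlocks_zero₁₂_of_isUnit_iff _ _ _ (by simp [h1, h4])]
  rw [hT]
  simp only [fromBlocks_multiply, fromBlocks_add, Matrix.mul_zero, Matrix.zero_mul,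
    add_zero, zero_add, Matrix.mul_add, Matrix.add_mul]
  have h : Y₁ * A₁ * Y₁ + Y₁ * (A₁ᵀ⁻¹ * S₁) * Y₁ + Y₁ * A₁ᵀ⁻¹ - A₁ * Y₁ = 0 := by
    rw [← hfix]; noncomm_ring
  rw [sub_eq_zero] at h ⊢
  rw [show Y₁ * A₁ * Y₁ + Y₁ * (A₁ᵀ⁻¹ * S₁) * Y₁ + Y₁ * A₁ᵀ⁻¹ = A₁ * Y₁ from h]
end

section
/- Let A be a contracting real n×n matrix and let W be any real n×n matrix. Then the series Z := ∑_{i=0}^∞ (Aᵀ)ⁱ W Aⁱ converges (the family is summable in the space of real n×n matrices), Z satisfies the Stein equation AᵀZA − Z = −W, and Z is the unique real n×n matrix satisfying this equation. Moreover, if W is symmetric positive definite then Z is symmetric positive definite. -/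
/-!
A contracting matrix has spectral radius `< 1` over `ℂ`, so by Gelfand's formula
`‖A ^ k‖ ≤ r ^ k` for some `r < 1` and all large `k`. In the Frobenius norm, which is
submultiplicative and invariant under transposition, the terms `(Aᵀ) ^ k * W * A ^ k` are then
dominated by `‖W‖ * (r ^ 2) ^ k`, so the series converges. Conjugating the series by `Aᵀ, A`
shifts it by one term, which is the Stein equation. The difference `D` of two solutions
satisfies `(Aᵀ) ^ k * D * A ^ k = D` for all `k`, and a summable constant sequence vanishes.
Finally, the quadratic form of `Z` is a sum of nonnegative terms whose `k = 0` term is that of `W`.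
-/

open Matrix

/-- A real square matrix is contracting if every complex root of its characteristic
polynomial has absolute value strictly less than `1`. -/
def Contracting {n : ℕ} (A : Matrix (Fin n) (Fin n) ℝ) : Prop :=
  ∀ μ : ℂ, (A.map (algebraMap ℝ ℂ)).charpoly.IsRoot μ → ‖μ‖ < 1

open Filter NNReal

theorem spectrum.eventually_nnnorm_pow_le_of_spectralRadius_lt {A : Type*} [NormedRing A]
    [NormedAlgebra ℂ A] [CompleteSpace A] {a : A} {r : ℝ≥0} (h : spectralRadius ℂ a < r) :
    ∀ᶠ k : ℕ in atTop, ‖a ^ k‖₊ ≤ r ^ k := by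
  filter_upwards [(pow_nnnorm_pow_one_div_tendsto_nhds_spectralRadius a).eventually_lt_const h,
    eventually_gt_atTop 0] with k hk hk0
  rw [one_div] at hk
  exact_mod_cast (ENNReal.rpow_inv_le_iff (by positivity)).mp hk.le

section
variable {R : Type*} [Ring R] [TopologicalSpace R] [IsTopologicalRing R] [T2Space R]
  {P Q M Z : R}

theorem HasSum.mul_mul_sub_eq_neg (h : HasSum (fun k : ℕ => P ^ k * M * Q ^ k) Z) :
    P * Z * Q - Z = -M := by
  have hshift : HasSum (fun k : ℕ => P ^ (k + 1) * M * Q ^ (k + 1)) (P * Z * Q) := by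
    have hterm : ∀ k : ℕ, P ^ (k + 1) * M * Q ^ (k + 1) = P * (P ^ k * M * Q ^ k) * Q := by
      intro k
      rw [pow_succ', pow_succ]
      simp only [mul_assoc]
    simpa only [hterm] using (h.mul_left P).mul_right Q
  rw [hshift.unique ((hasSum_nat_add_iff' 1).mpr h)]
  simp

theorem eq_zero_of_mul_mul_eq_self (hs : Summable fun k : ℕ => P ^ k * M * Q ^ k)
    (hM : P * M * Q = M) : M = 0 := by
  have hconst : ∀ k : ℕ, P ^ k * M * Q ^ k = M := by
    intro k
    induction k with
    | zero => simp
    | succ k ih =>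
      calc P ^ (k + 1) * M * Q ^ (k + 1) = P ^ k * (P * M * Q) * Q ^ k := by
            rw [pow_succ, pow_succ']
            simp only [mul_assoc]
        _ = M := by rw [hM, ih]
  exact tendsto_const_nhds_iff.mp (hs.tendsto_atTop_zero.congr hconst)

end

theorem HasSum.dotProduct_mulVec {ι R m n : Type*} [Fintype m] [Fintype n] [CommSemiring R]
    [TopologicalSpace R] [IsTopologicalSemiring R] {f : ι → Matrix m n R} {Z : Matrix m n R}
    (hf : HasSum f Z) (x : m → R) (y : n → R) :
    HasSum (fun i => x ⬝ᵥ (f i *ᵥ y)) (x ⬝ᵥ (Z *ᵥ y)) :=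
  hf.map (⟨⟨fun M => x ⬝ᵥ (M *ᵥ y), by simp⟩, fun M N => by
      simp only [add_mulVec, dotProduct_add]⟩ : Matrix m n R →+ R)
    (continuous_const.dotProduct (continuous_id.matrix_mulVec continuous_const))

open scoped ComplexOrder in
theorem Matrix.PosDef.of_hasSum {ι 𝕜 n : Type*} [RCLike 𝕜] [Fintype n] {f : ι → Matrix n n 𝕜}
    {Z : Matrix n n 𝕜} (hf : HasSum f Z) (hpos : ∀ i, (f i).PosSemidef) {i : ι}
    (hi : (f i).PosDef) : Z.PosDef := by
  refine PosDef.of_dotProduct_mulVec_pos ?_ fun x hx => ?_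
  · have : HasSum f Zᴴ := by simpa only [(hpos _).isHermitian.eq] using hf.matrix_conjTranspose
    exact this.unique hf
  · exact (hi.dotProduct_mulVec_pos hx).trans_le
      (le_hasSum (hf.dotProduct_mulVec (star x) x) i fun j _ => (hpos j).dotProduct_mulVec_nonneg x)

section
attribute [local instance] Matrix.frobeniusNormedRing Matrix.frobeniusNormedAlgebra

theorem Contracting.spectralRadius_lt_one {n : ℕ} {A : Matrix (Fin n) (Fin n) ℝ}
    (hA : Contracting A) : spectralRadius ℂ (A.map (algebraMap ℝ ℂ)) < 1 := by
  rcases (spectrum ℂ (A.map (algebraMap ℝ ℂ))).eq_empty_or_nonempty with h | h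
  · rw [spectralRadius, h]
    simp
  · exact_mod_cast spectrum.spectralRadius_lt_of_forall_lt_of_nonempty h fun μ hμ =>
      by exact_mod_cast hA μ (Matrix.mem_spectrum_iff_isRoot_charpoly.mp hμ)

theorem Contracting.exists_eventually_norm_pow_le {n : ℕ} {A : Matrix (Fin n) (Fin n) ℝ}
    (hA : Contracting A) : ∃ r : ℝ≥0, r < 1 ∧ ∀ᶠ k : ℕ in atTop, ‖A ^ k‖ ≤ r ^ k := by
  obtain ⟨r, hr, hr1⟩ := ENNReal.lt_iff_exists_nnreal_btwn.mp hA.spectralRadius_lt_one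
  refine ⟨r, mod_cast hr1, ?_⟩
  filter_upwards [spectrum.eventually_nnnorm_pow_le_of_spectralRadius_lt hr] with k hk
  rw [← frobenius_norm_map_eq (A ^ k) (algebraMap ℝ ℂ) Complex.norm_real, Matrix.map_pow]
  exact_mod_cast hk

theorem Contracting.summable_transpose_pow_mul_mul_pow {n : ℕ} {A : Matrix (Fin n) (Fin n) ℝ}
    (hA : Contracting A) (M : Matrix (Fin n) (Fin n) ℝ) :
    Summable fun k : ℕ => Aᵀ ^ k * M * A ^ k := by
  obtain ⟨r, hr1, hr⟩ := hA.exists_eventually_norm_pow_le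
  refine Summable.of_norm_bounded_eventually_nat
    ((summable_geometric_of_lt_one (sq_nonneg (r : ℝ)) (by simpa using hr1)).mul_left ‖M‖) ?_
  filter_upwards [hr] with k hk
  calc ‖Aᵀ ^ k * M * A ^ k‖ ≤ ‖A ^ k‖ * ‖M‖ * ‖A ^ k‖ := by
        rw [← transpose_pow]
        refine (frobenius_norm_mul _ _).trans ?_
        gcongr
        exact (frobenius_norm_mul _ _).trans_eq (by rw [frobenius_norm_transpose])
    _ ≤ r ^ k * ‖M‖ * r ^ k := by gcongr
    _ = ‖M‖ * ((r : ℝ) ^ 2) ^ k := by ring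

end

theorem stmt5 (n : ℕ) (A W : Matrix (Fin n) (Fin n) ℝ) (hA : Contracting A) :
    ∃ Z : Matrix (Fin n) (Fin n) ℝ,
      HasSum (fun i : ℕ => Aᵀ ^ i * W * A ^ i) Z ∧
      Aᵀ * Z * A - Z = -W ∧
      (∀ Z' : Matrix (Fin n) (Fin n) ℝ, Aᵀ * Z' * A - Z' = -W → Z' = Z) ∧
      (W.PosDef → Z.PosDef) := by
  have hs := hA.summable_transpose_pow_mul_mul_pow
  obtain ⟨Z, hZ⟩ := hs W
  have hstein := hZ.mul_mul_sub_eq_neg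
  refine ⟨Z, hZ, hstein, fun Z' hZ' => ?_, fun hW => ?_⟩
  · have hfix : Aᵀ * (Z' - Z) * A = Z' - Z := by
      rw [mul_sub, sub_mul, ← sub_eq_zero, ← sub_eq_zero.mpr (hZ'.trans hstein.symm)]
      abel
    exact sub_eq_zero.mp (eq_zero_of_mul_mul_eq_self (hs _) hfix)
  · refine PosDef.of_hasSum hZ (fun k => ?_) (i := 0) (by simpa using hW)
    simpa only [conjTranspose_eq_transpose_of_trivial, transpose_pow] using
      hW.posSemidef.conjTranspose_mul_mul_same (A ^ k)
end

section
/- Let A ∈ GL(n,ℝ) be contracting and let S be a symmetric positive definite real n×n matrix; set C := A + (Aᵀ)⁻¹S. Then there exists a unique invertible symmetric real n×n matrix Y satisfying the fixed point equation YCY + Y(Aᵀ)⁻¹ − AY = 0; this Y is negative definite, and it is given explicitly by Y = −(∑_{i=0}^∞ (Aᵀ)ⁱ (AᵀA + S) Aⁱ)⁻¹. -/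
/-!
For contracting `A`, Gelfand's formula bounds `‖A ^ k‖` by `r ^ k` with `r < 1`, so the series
`X = ∑ₖ (Aᵀ)ᵏ G Aᵏ` converges; it solves the Stein equation `X = Aᵀ X A + G`, and it is the only
solution, since a difference `D` of two solutions satisfies `D = (Aᵀ)ᵏ D Aᵏ → 0`. For positive
definite `G` the series is positive definite, being at least its first term `G`.

For invertible `Y`, multiplying `Y C Y + Y (Aᵀ)⁻¹ - A Y` by `Y⁻¹` on both sides and by `Aᵀ` on the
left turns the fixed point equation into the Stein equation for `W = -Y⁻¹` and `G = AᵀA + S`.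
Hence its invertible solutions are exactly `Y = -X⁻¹`.
-/

open Matrix

open Filter

theorem spectrum.exists_eventually_norm_pow_le_of_spectralRadius_lt_one {A : Type*} [NormedRing A]
    [NormedAlgebra ℂ A] [CompleteSpace A] {a : A} (ha : spectralRadius ℂ a < 1) :
    ∃ r : ℝ, 0 < r ∧ r < 1 ∧ ∀ᶠ k in atTop, ‖a ^ k‖ ≤ r ^ k := by
  obtain ⟨c, hρc, hc1⟩ := exists_between ha
  have hc : c ≠ ⊤ := hc1.ne_top
  have hr : 0 < c.toReal := ENNReal.toReal_pos (pos_of_gt hρc).ne' hc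
  refine ⟨c.toReal, hr, ENNReal.toReal_lt_of_lt_ofReal (by simpa using hc1), ?_⟩
  filter_upwards [(pow_norm_pow_one_div_tendsto_nhds_spectralRadius a).eventually_lt_const hρc,
    eventually_ge_atTop 1] with k hk hk1
  rw [← ENNReal.ofReal_toReal hc, ENNReal.ofReal_lt_ofReal_iff hr, one_div,
    Real.rpow_inv_lt_iff_of_pos (norm_nonneg _) hr.le (by positivity), Real.rpow_natCast] at hk
  exact hk.le

namespace Matrix

theorem posDef_tsum {m ι : Type*} [Fintype m] {f : ι → Matrix m m ℝ} (hf : Summable f)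
    (h : ∀ i, (f i).PosSemidef) (i₀ : ι) (hi₀ : (f i₀).PosDef) : (∑' i, f i).PosDef := by
  refine posDef_iff_dotProduct_mulVec.mpr ⟨?_, fun x hx => ?_⟩
  · rw [IsHermitian, conjTranspose_tsum]
    exact tsum_congr fun i => (h i).isHermitian
  · let q : Matrix m m ℝ →+ ℝ :=
      { toFun := fun M => star x ⬝ᵥ (M *ᵥ x)
        map_zero' := by simp
        map_add' := fun M N => by simp [add_mulVec, dotProduct_add] }
    have hq : Continuous q :=
      continuous_const.dotProduct (continuous_id.matrix_mulVec continuous_const)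
    exact (hi₀.dotProduct_mulVec_pos hx).trans_le <|
      le_hasSum (hf.hasSum.map q hq) i₀ fun i _ => (h i).dotProduct_mulVec_nonneg x

theorem inv_neg {m α : Type*} [Fintype m] [DecidableEq m] [CommRing α]
    (A : Matrix m m α) : (-A)⁻¹ = -A⁻¹ := by
  by_cases h : IsUnit A.det
  · exact inv_eq_left_inv (by simp [nonsing_inv_mul _ h])
  · have h' : ¬IsUnit (-A).det := by
      simpa [det_neg, IsUnit.mul_iff, (isUnit_neg_one (α := α)).pow] using h
    rw [nonsing_inv_apply_not_isUnit _ h, nonsing_inv_apply_not_isUnit _ h', neg_zero]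

theorem riccati_eq_zero_iff {m R : Type*} [Fintype m] [DecidableEq m] [CommRing R]
    {A S Y : Matrix m m R} (hA : IsUnit A) (hY : IsUnit Y) :
    Y * (A + Aᵀ⁻¹ * S) * Y + Y * Aᵀ⁻¹ - A * Y = 0 ↔ -Y⁻¹ = Aᵀ * -Y⁻¹ * A + (Aᵀ * A + S) := by
  have hAT : IsUnit Aᵀ := (isUnit_transpose A).mpr hA
  let _ := hY.invertible
  let _ := hAT.invertible
  have key : Aᵀ * (Y⁻¹ * (Y * (A + Aᵀ⁻¹ * S) * Y + Y * Aᵀ⁻¹ - A * Y) * Y⁻¹) =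
      -(-Y⁻¹ - (Aᵀ * -Y⁻¹ * A + (Aᵀ * A + S))) := by
    simp only [mul_add, mul_sub, add_mul, sub_mul, mul_assoc, inv_mul_cancel_left_of_invertible,
      mul_inv_cancel_left_of_invertible, mul_inv_of_invertible, mul_one]
    noncomm_ring
  have hYinv : IsUnit Y⁻¹ := isUnit_nonsing_inv_iff.mpr hY
  rw [← sub_eq_zero (a := -Y⁻¹), ← neg_eq_zero (a := -Y⁻¹ - _), ← key, hAT.mul_right_eq_zero,
    hYinv.mul_left_eq_zero, hYinv.mul_right_eq_zero]

end Matrix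

noncomputable def steinSum {n : ℕ} (A G : Matrix (Fin n) (Fin n) ℝ) : Matrix (Fin n) (Fin n) ℝ :=
  ∑' k : ℕ, Aᵀ ^ k * G * A ^ k

namespace Contracting

variable {n : ℕ} {A : Matrix (Fin n) (Fin n) ℝ}

section Frobenius

-- The Frobenius norm, unlike the operator norms, is invariant under transposition.

attribute [local instance] Matrix.frobeniusNormedAddCommGroup Matrix.frobeniusNormedRing
  Matrix.frobeniusNormedAlgebra

theorem spectralRadius_lt_one_s6 (hA : Contracting A) :
    spectralRadius ℂ (A.map (algebraMap ℝ ℂ)) < 1 := by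
  have : CompleteSpace (Matrix (Fin n) (Fin n) ℂ) := FiniteDimensional.complete ℂ _
  rcases (spectrum ℂ (A.map (algebraMap ℝ ℂ))).eq_empty_or_nonempty with h | h
  · rw [spectralRadius, h]
    simp
  · exact spectrum.spectralRadius_lt_of_forall_lt_of_nonempty h fun μ hμ => by
      exact_mod_cast hA μ (Matrix.mem_spectrum_iff_isRoot_charpoly.mp hμ)

theorem exists_eventually_norm_pow_le_s6 (hA : Contracting A) :
    ∃ r : ℝ, 0 < r ∧ r < 1 ∧ ∀ᶠ k in atTop, ‖A ^ k‖ ≤ r ^ k := by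
  have : CompleteSpace (Matrix (Fin n) (Fin n) ℂ) := FiniteDimensional.complete ℂ _
  obtain ⟨r, hr0, hr1, hr⟩ :=
    spectrum.exists_eventually_norm_pow_le_of_spectralRadius_lt_one hA.spectralRadius_lt_one_s6
  refine ⟨r, hr0, hr1, hr.mono fun k hk => ?_⟩
  rwa [← Matrix.map_pow, frobenius_norm_map_eq _ _ (by simp)] at hk

theorem summable_transpose_pow_mul_mul_pow_s6 (hA : Contracting A) (G : Matrix (Fin n) (Fin n) ℝ) :
    Summable fun k => Aᵀ ^ k * G * A ^ k := by
  obtain ⟨r, hr0, hr1, hr⟩ := hA.exists_eventually_norm_pow_le_s6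
  have hr2 : r * r < 1 := mul_lt_one_of_nonneg_of_lt_one_left hr0.le hr1 hr1.le
  refine Summable.of_norm_bounded_eventually_nat
    ((summable_geometric_of_lt_one (by positivity) hr2).mul_left ‖G‖) ?_
  filter_upwards [hr] with k hk
  calc ‖Aᵀ ^ k * G * A ^ k‖ ≤ ‖A ^ k‖ * ‖G‖ * ‖A ^ k‖ := by
        refine norm_mul₃_le.trans_eq ?_
        rw [← transpose_pow, frobenius_norm_transpose]
    _ ≤ r ^ k * ‖G‖ * r ^ k := by gcongr
    _ = ‖G‖ * (r * r) ^ k := by ring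

end Frobenius

theorem steinSum_eq (hA : Contracting A) (G : Matrix (Fin n) (Fin n) ℝ) :
    steinSum A G = Aᵀ * steinSum A G * A + G := by
  have hs := hA.summable_transpose_pow_mul_mul_pow_s6 G
  have hshift (k : ℕ) : Aᵀ ^ (k + 1) * G * A ^ (k + 1) = Aᵀ * (Aᵀ ^ k * G * A ^ k) * A := by
    rw [pow_succ', pow_succ]
    noncomm_ring
  have h := hs.tsum_eq_zero_add
  simp only [hshift, (hs.mul_left Aᵀ).tsum_mul_right, hs.tsum_mul_left, pow_zero, one_mul,
    mul_one] at h
  exact h.trans (add_comm _ _)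

theorem eq_steinSum_of_eq (hA : Contracting A) {G W : Matrix (Fin n) (Fin n) ℝ}
    (hW : W = Aᵀ * W * A + G) : W = steinSum A G := by
  have hD : W - steinSum A G = Aᵀ * (W - steinSum A G) * A := by
    nth_rw 1 [hW, hA.steinSum_eq G]
    noncomm_ring
  set D := W - steinSum A G
  have hDk : ∀ k : ℕ, Aᵀ ^ k * D * A ^ k = D := by
    intro k
    induction k with
    | zero => simp
    | succ k ih =>
      calc Aᵀ ^ (k + 1) * D * A ^ (k + 1) = Aᵀ ^ k * (Aᵀ * D * A) * A ^ k := by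
            rw [pow_succ, pow_succ']
            noncomm_ring
        _ = D := by rw [← hD, ih]
  have := (hA.summable_transpose_pow_mul_mul_pow_s6 D).tendsto_atTop_zero
  simp only [hDk, tendsto_const_nhds_iff] at this
  exact sub_eq_zero.mp this

theorem posDef_steinSum (hA : Contracting A) {G : Matrix (Fin n) (Fin n) ℝ} (hG : G.PosDef) :
    (steinSum A G).PosDef := by
  refine posDef_tsum (hA.summable_transpose_pow_mul_mul_pow_s6 G) (fun k => ?_) 0 (by simpa using hG)
  simpa using hG.posSemidef.conjTranspose_mul_mul_same (A ^ k)

end Contracting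

theorem stmt6 (n : ℕ) (A S : Matrix (Fin n) (Fin n) ℝ)
    (hA : IsUnit A) (hAc : Contracting A) (hS : S.PosDef) :
    (∃! Y : Matrix (Fin n) (Fin n) ℝ,
      Y.IsSymm ∧ IsUnit Y ∧ Y * (A + Aᵀ⁻¹ * S) * Y + Y * Aᵀ⁻¹ - A * Y = 0) ∧
    (∀ Y : Matrix (Fin n) (Fin n) ℝ,
      Y.IsSymm → IsUnit Y → Y * (A + Aᵀ⁻¹ * S) * Y + Y * Aᵀ⁻¹ - A * Y = 0 →
        (-Y).PosDef ∧ Y = -(∑' i : ℕ, Aᵀ ^ i * (Aᵀ * A + S) * A ^ i)⁻¹) := by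
  have hX : (steinSum A (Aᵀ * A + S)).PosDef := hAc.posDef_steinSum <| by
    simpa using PosDef.posSemidef_add (posSemidef_conjTranspose_mul_self A) hS
  have solution_iff : ∀ Y, IsUnit Y → (Y * (A + Aᵀ⁻¹ * S) * Y + Y * Aᵀ⁻¹ - A * Y = 0 ↔
      Y = -(steinSum A (Aᵀ * A + S))⁻¹) := by
    intro Y hY
    rw [riccati_eq_zero_iff hA hY]
    constructor
    · intro h
      rw [← hAc.eq_steinSum_of_eq h, Matrix.inv_neg, neg_neg,
        nonsing_inv_nonsing_inv Y ((isUnit_iff_isUnit_det Y).mp hY)]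
    · rintro rfl
      simpa [Matrix.inv_neg, nonsing_inv_nonsing_inv _ ((isUnit_iff_isUnit_det _).mp hX.isUnit)]
        using hAc.steinSum_eq (Aᵀ * A + S)
  have hunit : IsUnit (-(steinSum A (Aᵀ * A + S))⁻¹) := hX.inv.isUnit.neg
  refine ⟨⟨_, ⟨?_, hunit, (solution_iff _ hunit).2 rfl⟩,
    fun Y hY => (solution_iff Y hY.2.1).1 hY.2.2⟩, fun Y _ hY h => ?_⟩
  · simpa using hX.inv.isHermitian
  · obtain rfl := (solution_iff Y hY).1 h
    exact ⟨by simpa using hX.inv, rfl⟩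
end

section
/- Let A be a real n×n matrix having a root λ ∈ ℂ of its characteristic polynomial with |λ| = 1, and let M be any symmetric real n×n matrix. Then AᵀMA − M is not positive definite. -/
/-!
Take a complex eigenvector `v` of `A` for the eigenvalue `μ` with `|μ| = 1`. Then
`v* (Aᵀ M A - M) v = (|μ|² - 1) v* M v = 0`. But a real positive definite matrix stays positive
definite over `ℂ`: for `v = x + i y` and `B` symmetric, `v* B v = xᵀ B x + yᵀ B y`.
-/

open Matrix

theorem RCLike.semiconj_algebraMap_star {𝕜 : Type*} [RCLike 𝕜] :
    Function.Semiconj (algebraMap ℝ 𝕜) star star :=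
  fun x => (RCLike.conj_ofReal x).symm

namespace Matrix

variable {n : Type*} [Fintype n]

theorem star_dotProduct_conjTranspose_mul_mul_mulVec {R : Type*} [CommRing R] [StarRing R]
    {A : Matrix n n R} (M : Matrix n n R) {v : n → R} {μ : R} (hv : A *ᵥ v = μ • v) :
    star v ⬝ᵥ ((Aᴴ * M * A) *ᵥ v) = star μ * μ * (star v ⬝ᵥ (M *ᵥ v)) := by
  rw [← mulVec_mulVec, ← mulVec_mulVec, dotProduct_mulVec, ← star_mulVec, hv, star_smul,
    mulVec_smul, smul_dotProduct, dotProduct_smul, smul_eq_mul, smul_eq_mul, mul_assoc]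

open scoped ComplexOrder

variable {𝕜 : Type*} [RCLike 𝕜]

omit [Fintype n] in
theorem conjTranspose_map_algebraMap (A : Matrix n n ℝ) :
    (A.map (algebraMap ℝ 𝕜))ᴴ = Aᵀ.map (algebraMap ℝ 𝕜) := by
  rw [← conjTranspose_map _ RCLike.semiconj_algebraMap_star,
    conjTranspose_eq_transpose_of_trivial]

theorem star_dotProduct_map_algebraMap_mulVec {B : Matrix n n ℝ} (hB : B.IsSymm)
    (v : n → 𝕜) :
    star v ⬝ᵥ (B.map (algebraMap ℝ 𝕜) *ᵥ v) =
      (((RCLike.re ∘ v) ⬝ᵥ (B *ᵥ (RCLike.re ∘ v)) +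
        (RCLike.im ∘ v) ⬝ᵥ (B *ᵥ (RCLike.im ∘ v)) : ℝ) : 𝕜) := by
  apply RCLike.ext
  · simp only [dotProduct, mulVec, map_apply, Pi.star_apply, Finset.mul_sum, map_sum,
      RCLike.ofReal_re, Function.comp_apply, ← Finset.sum_add_distrib]
    refine Finset.sum_congr rfl fun i _ => Finset.sum_congr rfl fun j _ => ?_
    simp [RCLike.mul_re]
  · have hswap : ∑ i, ∑ j, B i j * RCLike.re (v i) * RCLike.im (v j) =
        ∑ i, ∑ j, B i j * RCLike.im (v i) * RCLike.re (v j) := by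
      rw [Finset.sum_comm]
      exact Finset.sum_congr rfl fun i _ => Finset.sum_congr rfl fun j _ => by
        rw [hB.apply i j]; ring
    rw [← sub_eq_zero, ← Finset.sum_sub_distrib] at hswap
    simp only [← Finset.sum_sub_distrib] at hswap
    simp only [dotProduct, Pi.star_apply, RCLike.star_def, mulVec, map_apply, Finset.mul_sum,
      map_sum, RCLike.mul_im, RCLike.conj_re, RCLike.ofReal_re, RCLike.ofReal_im, zero_mul,
      add_zero, RCLike.conj_im, RCLike.mul_re, sub_zero, neg_mul, Function.comp_apply, map_add,
      map_mul, mul_zero, Finset.sum_const_zero]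
    rw [← hswap]
    exact Finset.sum_congr rfl fun i _ => Finset.sum_congr rfl fun j _ => by ring

theorem PosDef.map_algebraMap {B : Matrix n n ℝ} (hB : B.PosDef) :
    (B.map (algebraMap ℝ 𝕜)).PosDef := by
  refine PosDef.of_dotProduct_mulVec_pos (hB.1.map _ RCLike.semiconj_algebraMap_star) fun v hv => ?_
  rw [star_dotProduct_map_algebraMap_mulVec (isHermitian_iff_isSymm.1 hB.1), RCLike.ofReal_pos]
  have hnonneg (w : n → ℝ) : 0 ≤ w ⬝ᵥ (B *ᵥ w) := by
    simpa using hB.posSemidef.dotProduct_mulVec_nonneg w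
  have hpos {w : n → ℝ} (hw : w ≠ 0) : 0 < w ⬝ᵥ (B *ᵥ w) := by
    simpa using hB.dotProduct_mulVec_pos hw
  by_cases hre : RCLike.re ∘ v = 0
  · have him : RCLike.im ∘ v ≠ 0 := fun him => hv <| funext fun i =>
      RCLike.ext (by simpa using congrFun hre i) (by simpa using congrFun him i)
    linarith [hnonneg (RCLike.re ∘ v), hpos him]
  · linarith [hnonneg (RCLike.im ∘ v), hpos hre]

end Matrix

theorem stmt8_general (n : ℕ) (A M : Matrix (Fin n) (Fin n) ℝ)
    (hA : ∃ μ : ℂ, (A.map (algebraMap ℝ ℂ)).charpoly.IsRoot μ ∧ ‖μ‖ = 1) :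
    ¬ (Aᵀ * M * A - M).PosDef := by
  intro hPD
  obtain ⟨μ, hroot, hμ⟩ := hA
  set A' := A.map (algebraMap ℝ ℂ)
  have hroot' : A'.toLin'.charpoly.IsRoot μ := by rwa [charpoly_toLin']
  obtain ⟨v, hv⟩ :=
    ((Module.End.hasEigenvalue_iff_isRoot_charpoly _ μ).2 hroot').exists_hasEigenvector
  have hAv : A' *ᵥ v = μ • v := by simpa using hv.apply_eq_smul
  have hμ_unit : star μ * μ = 1 := by simp [RCLike.star_def, RCLike.conj_mul, hμ]
  have hzero : star v ⬝ᵥ ((Aᵀ * M * A - M).map (algebraMap ℝ ℂ) *ᵥ v) = 0 := by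
    rw [Matrix.map_sub _ (map_sub (algebraMap ℝ ℂ)), Matrix.map_mul, Matrix.map_mul,
      ← conjTranspose_map_algebraMap, sub_mulVec, dotProduct_sub,
      star_dotProduct_conjTranspose_mul_mul_mulVec _ hAv, hμ_unit, one_mul, sub_self]
  open scoped ComplexOrder in
  exact (hPD.map_algebraMap.dotProduct_mulVec_pos hv.2).ne' hzero

theorem stmt8 (n : ℕ) (A M : Matrix (Fin n) (Fin n) ℝ)
    (hA : ∃ μ : ℂ, (A.map (algebraMap ℝ ℂ)).charpoly.IsRoot μ ∧ ‖μ‖ = 1)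
    (hM : M.IsSymm) :
    ¬ (Aᵀ * M * A - M).PosDef :=
  stmt8_general n A M hA
end

section
/- Let A ∈ GL(n,ℝ) be such that every root λ ∈ ℂ of its characteristic polynomial satisfies |λ| = 1, and let S be a symmetric positive definite real n×n matrix; set C := A + (Aᵀ)⁻¹S. Then Y = 0 is the only symmetric real n×n matrix satisfying the fixed point equation YCY + Y(Aᵀ)⁻¹ − AY = 0. -/
open Matrix
open scoped ComplexOrder

/-!
With `R := (A + Aᵀ⁻¹ S) Y + Aᵀ⁻¹` and the positive definite `P := Aᵀ A + S`, the fixed point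
equation reads `Y R = A Y`, and `Aᵀ R = P Y + 1` then gives `Rᵀ Y R = Y + Y P Y`.
Thus the range of `Y` is `A`-invariant, and if `Y ≠ 0` it contains a complex eigenvector
`v = Y w` of `A`, whose eigenvalue `μ` has `|μ| = 1`. Evaluating the Hermitian form of
`Rᴴ Y R` at `w` gives `|μ|² w* Y w = w* Y w + v* P v`, so `v* P v = 0` and `v = 0`.
-/

namespace Module.End

theorem exists_hasEigenvector_mem_of_mapsTo {K V : Type*} [Field K] [IsAlgClosed K]
    [AddCommGroup V] [Module K V] [FiniteDimensional K V] (f : End K V) {W : Submodule K V}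
    (hW : ∀ x ∈ W, f x ∈ W) (hne : W ≠ ⊥) : ∃ μ, ∃ v ∈ W, f.HasEigenvector μ v := by
  have : Nontrivial W := Submodule.nontrivial_iff_ne_bot.mpr hne
  obtain ⟨μ, hμ⟩ := exists_eigenvalue (f.restrict hW)
  obtain ⟨v, hv, hv0⟩ := hμ.exists_hasEigenvector
  refine ⟨μ, v, v.2, mem_eigenspace_iff.mpr ?_, by simpa using hv0⟩
  exact congrArg Subtype.val (mem_eigenspace_iff.mp hv)

end Module.End

namespace Matrix

variable {n : Type*} [Fintype n]

theorem re_star_dotProduct_map_ofReal_mulVec (P : Matrix n n ℝ) (v : n → ℂ) :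
    (star v ⬝ᵥ (P.map (algebraMap ℝ ℂ) *ᵥ v)).re =
      (fun i ↦ (v i).re) ⬝ᵥ (P *ᵥ fun i ↦ (v i).re) +
        (fun i ↦ (v i).im) ⬝ᵥ (P *ᵥ fun i ↦ (v i).im) := by
  simp only [dotProduct, mulVec, Finset.mul_sum, Complex.re_sum, ← Finset.sum_add_distrib]
  refine Finset.sum_congr rfl fun i _ ↦ Finset.sum_congr rfl fun j _ ↦ ?_
  simp [Complex.mul_re, Complex.mul_im]

theorem PosDef.map_ofReal {P : Matrix n n ℝ} (hP : P.PosDef) :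
    (P.map (algebraMap ℝ ℂ)).PosDef := by
  have hH : (P.map (algebraMap ℝ ℂ)).IsHermitian :=
    hP.isHermitian.map _ fun x ↦ by simp
  refine .of_dotProduct_mulVec_pos hH fun v hv ↦ Complex.lt_def.mpr ⟨?_, ?_⟩
  · have hpos : ∀ x : n → ℝ, x ≠ 0 → 0 < x ⬝ᵥ (P *ᵥ x) := fun x hx ↦ by
      simpa using hP.dotProduct_mulVec_pos hx
    have hnonneg : ∀ x : n → ℝ, 0 ≤ x ⬝ᵥ (P *ᵥ x) := fun x ↦ by
      simpa using hP.posSemidef.dotProduct_mulVec_nonneg x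
    rw [re_star_dotProduct_map_ofReal_mulVec, Complex.zero_re]
    by_cases hre : (fun i ↦ (v i).re) = 0
    · have him : (fun i ↦ (v i).im) ≠ 0 := fun him ↦ hv <| funext fun i ↦
        Complex.ext (congrFun hre i) (congrFun him i)
      linarith [hpos _ him, hnonneg fun i ↦ (v i).re]
    · linarith [hpos _ hre, hnonneg fun i ↦ (v i).im]
  · exact (hH.im_star_dotProduct_mulVec_self v).symm

section Complex

variable {Y R A P : Matrix n n ℂ}

theorem IsHermitian.star_dotProduct_mulVec (hY : Y.IsHermitian) (v w : n → ℂ) :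
    star v ⬝ᵥ (Y *ᵥ w) = star (Y *ᵥ v) ⬝ᵥ w := by
  rw [dotProduct_mulVec, star_mulVec, hY]

theorem mulVec_eq_zero_of_norm_eq_one_of_mulVec_eq_smul (hY : Y.IsHermitian) (hP : P.PosDef)
    (hYR : Y * R = A * Y) (hRYR : Rᴴ * Y * R = Y + Y * P * Y) {μ : ℂ} (hμ : ‖μ‖ = 1)
    {w : n → ℂ} (hw : A *ᵥ (Y *ᵥ w) = μ • (Y *ᵥ w)) : Y *ᵥ w = 0 := by
  set v := Y *ᵥ w
  have hYRw : Y *ᵥ (R *ᵥ w) = μ • v := by rw [mulVec_mulVec, hYR, ← mulVec_mulVec, hw]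
  have hform : star w ⬝ᵥ ((Rᴴ * Y * R) *ᵥ w) = star v ⬝ᵥ w := by
    calc star w ⬝ᵥ ((Rᴴ * Y * R) *ᵥ w) = star (R *ᵥ w) ⬝ᵥ (Y *ᵥ (R *ᵥ w)) := by
          rw [← mulVec_mulVec, ← mulVec_mulVec, dotProduct_mulVec, star_mulVec]
      _ = μ * star (μ • v) ⬝ᵥ w := by
          rw [hYRw, dotProduct_smul, hY.star_dotProduct_mulVec, hYRw, smul_eq_mul]
      _ = star v ⬝ᵥ w := by
          rw [star_smul, smul_dotProduct, smul_eq_mul, ← mul_assoc, RCLike.star_def,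
            Complex.mul_conj, Complex.normSq_eq_norm_sq, hμ]
          simp
  have hzero : star v ⬝ᵥ (P *ᵥ v) = 0 := by
    have hsplit : star w ⬝ᵥ ((Rᴴ * Y * R) *ᵥ w) = star v ⬝ᵥ w + star v ⬝ᵥ (P *ᵥ v) := by
      rw [hRYR, add_mulVec, dotProduct_add, hY.star_dotProduct_mulVec, Matrix.mul_assoc,
        ← mulVec_mulVec, hY.star_dotProduct_mulVec, ← mulVec_mulVec]
    simpa [hform] using hsplit
  by_contra hv
  exact (hP.dotProduct_mulVec_pos hv).ne' hzero

theorem eq_zero_of_mul_eq_mul_of_conjTranspose_mul_mul_eq [DecidableEq n] (hY : Y.IsHermitian)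
    (hP : P.PosDef) (hYR : Y * R = A * Y) (hRYR : Rᴴ * Y * R = Y + Y * P * Y)
    (hA : ∀ μ : ℂ, A.charpoly.IsRoot μ → ‖μ‖ = 1) : Y = 0 := by
  have hinv : ∀ v ∈ LinearMap.range (toLin' Y), toLin' A v ∈ LinearMap.range (toLin' Y) := by
    rintro _ ⟨w, rfl⟩
    exact ⟨R *ᵥ w, by simp [mulVec_mulVec, hYR]⟩
  by_contra hY0
  have hne : LinearMap.range (toLin' Y) ≠ ⊥ := by
    simpa [LinearMap.range_eq_bot] using hY0
  obtain ⟨μ, _, ⟨w, rfl⟩, hv⟩ :=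
    Module.End.exists_hasEigenvector_mem_of_mapsTo (toLin' A) hinv hne
  have hμ : ‖μ‖ = 1 := hA μ <| by
    rw [← charpoly_toLin', ← Module.End.hasEigenvalue_iff_isRoot_charpoly]
    exact Module.End.hasEigenvalue_of_hasEigenvector hv
  exact hv.2 <| mulVec_eq_zero_of_norm_eq_one_of_mulVec_eq_smul hY hP hYR hRYR hμ <| by
    simpa using Module.End.mem_eigenspace_iff.mp hv.1

end Complex

theorem transpose_mul_mul_eq_of_mul_eq_mul {K : Type*} [CommRing K] [DecidableEq n]
    {Y R A P : Matrix n n K} (hY : Y.IsSymm) (hP : P.IsSymm) (hYR : Y * R = A * Y)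
    (hAR : Aᵀ * R = P * Y + 1) : Rᵀ * Y * R = Y + Y * P * Y :=
  calc Rᵀ * Y * R = (Aᵀ * R)ᵀ * Y := by
        rw [Matrix.mul_assoc, hYR, transpose_mul, transpose_transpose, Matrix.mul_assoc]
    _ = Y + Y * P * Y := by
        rw [hAR, transpose_add, transpose_mul, hP.eq, hY.eq, transpose_one, Matrix.add_mul,
          Matrix.one_mul, add_comm]

theorem eq_zero_of_mul_eq_mul_of_transpose_mul_mul_eq [DecidableEq n] {Y R A P : Matrix n n ℝ}
    (hY : Y.IsSymm) (hP : P.PosDef) (hYR : Y * R = A * Y) (hRYR : Rᵀ * Y * R = Y + Y * P * Y)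
    (hA : ∀ μ : ℂ, (A.map (algebraMap ℝ ℂ)).charpoly.IsRoot μ → ‖μ‖ = 1) : Y = 0 := by
  have hYc : (Y.map (algebraMap ℝ ℂ)).IsHermitian :=
    (isHermitian_iff_isSymm.mpr hY).map _ fun x ↦ by simp
  have hRc : (R.map (algebraMap ℝ ℂ))ᴴ = Rᵀ.map (algebraMap ℝ ℂ) := by
    rw [← conjTranspose_map _ fun x ↦ by simp, conjTranspose_eq_transpose_of_trivial]
  have hYc0 := eq_zero_of_mul_eq_mul_of_conjTranspose_mul_mul_eq (R := R.map (algebraMap ℝ ℂ))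
    (P := P.map (algebraMap ℝ ℂ)) hYc hP.map_ofReal
    (by rw [← Matrix.map_mul, ← Matrix.map_mul, hYR])
    (by rw [hRc, ← Matrix.map_mul, ← Matrix.map_mul, ← Matrix.map_mul, ← Matrix.map_mul, hRYR,
      Matrix.map_add _ (map_add _)])
    hA
  exact map_injective (algebraMap ℝ ℂ).injective <|
    hYc0.trans (Matrix.map_zero _ (map_zero _)).symm

end Matrix

theorem stmt9 (n : ℕ) (A S : Matrix (Fin n) (Fin n) ℝ)
    (hA : IsUnit A)
    (hroots : ∀ μ : ℂ, (A.map (algebraMap ℝ ℂ)).charpoly.IsRoot μ → ‖μ‖ = 1)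
    (hS : S.PosDef) :
    ∀ Y : Matrix (Fin n) (Fin n) ℝ, Y.IsSymm →
      (Y * (A + Aᵀ⁻¹ * S) * Y + Y * Aᵀ⁻¹ - A * Y = 0 ↔ Y = 0) := by
  intro Y hY
  refine ⟨fun h ↦ ?_, by rintro rfl; simp⟩
  set R := (A + Aᵀ⁻¹ * S) * Y + Aᵀ⁻¹
  set P := Aᵀ * A + S
  have hYR : Y * R = A * Y := by
    rw [← sub_eq_zero, ← h, Matrix.mul_add, ← Matrix.mul_assoc]
  have hAR : Aᵀ * R = P * Y + 1 := by
    have hAT : Aᵀ * Aᵀ⁻¹ = 1 := mul_nonsing_inv _ <| by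
      simpa using (isUnit_iff_isUnit_det A).mp hA
    simp only [R, P, Matrix.mul_add, ← Matrix.mul_assoc, hAT, Matrix.one_mul, Matrix.add_mul]
  have hP : P.PosDef :=
    PosDef.posSemidef_add (by simpa using posSemidef_conjTranspose_mul_self A) hS
  exact eq_zero_of_mul_eq_mul_of_transpose_mul_mul_eq hY hP hYR
    (transpose_mul_mul_eq_of_mul_eq_mul hY (isHermitian_iff_isSymm.mp hP.isHermitian) hYR hAR)
    hroots
end

section
/- Let X and X̄ be matrices in GL(n,ℝ) such that every root λ ∈ ℂ of the characteristic polynomial of X and of X̄ satisfies |λ| ≤ 1, and suppose that X or X̄ has a characteristic root of absolute value exactly 1. Let S, S̄ be symmetric positive definite real n×n matrices, and define c := [[X, 0], [X + (Xᵀ)⁻¹S, (Xᵀ)⁻¹]] and c̄ := [[(X̄ᵀ)⁻¹, −(X̄ᵀ)⁻¹ − S̄X̄], [0, X̄]], both elements of Sp(2n,ℝ). Then c̄ and c⁻¹ are not conjugate in Sp(2n,ℝ): there is no g ∈ Sp(2n,ℝ) with g·c̄·g⁻¹ = c⁻¹. -/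
open Matrix

/-!
Write `ω(u, v) = u* J v` for the Hermitian symplectic form on `ℂ²ⁿ`. Both `c⁻¹` and `K c̄ K`, with
`K` the block swap, have the block lower triangular shape `A = [[Y, 0], [-(D + S Y), D]]` with
`Yᵀ D = 1` and `S` positive definite, and `g c̄ g⁻¹ = c⁻¹` with `g` symplectic becomes
`H (K c̄ K) = c⁻¹ H` with `H = g K` anti-symplectic (`Hᵀ J H = -J`).

For `|μ| = 1`, if the first component `x` of `v` satisfies `Y x = μ x`, then
`ω(v, (A - μ) v) = μ ⟨x, (1 + S) x⟩`: all unimodular eigenvalues of `Y` carry the same Krein sign.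
As `H` reverses the sign of `ω`, induction on `k` shows that on both sides every vector killed by
`(A - μ)^k` has vanishing first component. But an eigenvector `x` of `Y` always lifts to a
generalized eigenvector of `A` with first component a nonzero multiple of `x`; take for `μ` a
unimodular eigenvalue of `X⁻¹` or of `X̄`.
-/

open Polynomial
open scoped ComplexOrder

namespace Matrix

section Eigen

variable {m : Type*} [Fintype m] [DecidableEq m]

lemma exists_mulVec_eq_smul_of_isRoot_charpoly {R : Type*} [CommRing R] [IsDomain R]
    {M : Matrix m m R} {μ : R} (h : M.charpoly.IsRoot μ) : ∃ x ≠ 0, M *ᵥ x = μ • x := by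
  obtain ⟨x, hx, hMx⟩ := exists_mulVec_eq_zero_iff.mpr ((eval_charpoly M μ).symm.trans h)
  refine ⟨x, hx, ?_⟩
  rwa [sub_mulVec, scalar_apply, ← smul_one_eq_diagonal, smul_mulVec, one_mulVec, sub_eq_zero,
    eq_comm] at hMx

lemma mulVec_eq_inv_smul_of_mul_eq_one {K : Type*} [Field K] {M N : Matrix m m K}
    (hNM : N * M = 1) {μ : K} (hμ : μ ≠ 0) {x : m → K} (hx : M *ᵥ x = μ • x) :
    N *ᵥ x = μ⁻¹ • x := by
  rw [eq_inv_smul_iff₀ hμ, ← mulVec_smul, ← hx, mulVec_mulVec, hNM, one_mulVec]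

end Eigen

section BlockTriangular

variable {R : Type*} [CommRing R] {m p : Type*}

lemma fromBlocks_zero₁₂_sub_smul_one [DecidableEq m] [DecidableEq p] (Y : Matrix m m R)
    (E : Matrix p m R) (D : Matrix p p R) (μ : R) :
    fromBlocks Y 0 E D - μ • 1 = fromBlocks (Y - μ • 1) 0 E (D - μ • 1) := by
  rw [← fromBlocks_one, fromBlocks_smul, sub_eq_add_neg, fromBlocks_neg, fromBlocks_add]
  simp [sub_eq_add_neg]

variable [Fintype m] [Fintype p]

lemma fromBlocks_zero₁₂_mulVec_inl (Y : Matrix m m R) (E : Matrix p m R) (D : Matrix p p R)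
    (v : m ⊕ p → R) : (fromBlocks Y 0 E D *ᵥ v) ∘ Sum.inl = Y *ᵥ (v ∘ Sum.inl) := by
  simp [fromBlocks_mulVec]

variable [DecidableEq m] [DecidableEq p]

lemma mulVec_inl_eq_smul_of_pow_succ_mulVec_eq_zero {Y : Matrix m m R} {E : Matrix p m R}
    {D : Matrix p p R} {μ : R} {k : ℕ}
    (ih : ∀ w, (fromBlocks Y 0 E D - μ • 1) ^ k *ᵥ w = 0 → w ∘ Sum.inl = 0) {v : m ⊕ p → R}
    (hv : (fromBlocks Y 0 E D - μ • 1) ^ (k + 1) *ᵥ v = 0) :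
    Y *ᵥ (v ∘ Sum.inl) = μ • (v ∘ Sum.inl) := by
  have h := ih ((fromBlocks Y 0 E D - μ • 1) *ᵥ v) (by rwa [mulVec_mulVec, ← pow_succ])
  rwa [fromBlocks_zero₁₂_sub_smul_one, fromBlocks_zero₁₂_mulVec_inl, sub_mulVec, smul_mulVec,
    one_mulVec, sub_eq_zero] at h

lemma aeval_fromBlocks_zero₁₂_mulVec_inl {Y : Matrix m m R} (E : Matrix p m R)
    (D : Matrix p p R) {μ : R} {v : m ⊕ p → R} (hv : Y *ᵥ (v ∘ Sum.inl) = μ • (v ∘ Sum.inl))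
    (f : R[X]) :
    (aeval (fromBlocks Y 0 E D) f *ᵥ v) ∘ Sum.inl = f.eval μ • (v ∘ Sum.inl) := by
  induction f using Polynomial.induction_on with
  | C a => ext i; simp [Algebra.algebraMap_eq_smul_one, smul_mulVec]
  | add f g hf hg => simp only [map_add, add_mulVec, eval_add, add_smul, ← hf, ← hg]; rfl
  | monomial k a ih =>
    rw [show C a * X ^ (k + 1) = X * (C a * X ^ k) by ring, map_mul, aeval_X, ← mulVec_mulVec,
      fromBlocks_zero₁₂_mulVec_inl, ih, mulVec_smul, hv, smul_smul]
    simp only [eval_mul, eval_X, mul_comm]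

lemma exists_pow_sub_smul_mulVec_eq_zero_and_inl_ne_zero [IsDomain R] {Y : Matrix m m R}
    (E : Matrix p m R) (D : Matrix p p R) {μ : R} {x : m → R} (hx : x ≠ 0)
    (hYx : Y *ᵥ x = μ • x) :
    ∃ k v, (fromBlocks Y 0 E D - μ • 1) ^ k *ᵥ v = 0 ∧ v ∘ Sum.inl ≠ 0 := by
  set A := fromBlocks Y 0 E D
  set k := A.charpoly.rootMultiplicity μ
  set v : m ⊕ p → R := Sum.elim x 0
  -- Cayley–Hamilton kills `(A - μ)^k q(A)`, while the first component of `q(A) v` is `q(μ) x`.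
  refine ⟨k, aeval A (A.charpoly /ₘ (X - C μ) ^ k) *ᵥ v, ?_, ?_⟩
  · have hsub : A - μ • 1 = aeval A (X - C μ) := by
      rw [map_sub, aeval_X, aeval_C, Algebra.algebraMap_eq_smul_one]
    rw [mulVec_mulVec, hsub, ← map_pow, ← map_mul, pow_mul_divByMonic_rootMultiplicity_eq,
      aeval_self_charpoly, zero_mulVec]
  · rw [aeval_fromBlocks_zero₁₂_mulVec_inl E D hYx]
    exact smul_ne_zero (eval_divByMonic_pow_rootMultiplicity_ne_zero μ A.charpoly_monic.ne_zero) hx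

end BlockTriangular

def lowerBlock {l R : Type*} [CommRing R] [Fintype l] (Y D S : Matrix l l R) :
    Matrix (l ⊕ l) (l ⊕ l) R :=
  fromBlocks Y 0 (-(D + S * Y)) D

section Krein

variable {l : Type*} [Fintype l] [DecidableEq l]

def sympForm (u v : l ⊕ l → ℂ) : ℂ := star u ⬝ᵥ (J l ℂ *ᵥ v)

lemma sympForm_mulVec_mulVec {H : Matrix (l ⊕ l) (l ⊕ l) ℂ} (hH : Hᴴ * J l ℂ * H = -J l ℂ)
    (u v : l ⊕ l → ℂ) : sympForm (H *ᵥ u) (H *ᵥ v) = -sympForm u v := by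
  rw [sympForm, sympForm, star_mulVec, mulVec_mulVec, dotProduct_mulVec, vecMul_vecMul,
    ← Matrix.mul_assoc, hH, ← dotProduct_mulVec, neg_mulVec, dotProduct_neg]

lemma star_vecMul_eq_smul_star {Y D : Matrix l l ℂ} (hYD : Yᴴ * D = 1) {μ : ℂ}
    (hμ : star μ * μ = 1) {x : l → ℂ} (hx : Y *ᵥ x = μ • x) : star x ᵥ* D = μ • star x := by
  have h : star μ • (star x ᵥ* D) = star x := by
    rw [← smul_vecMul, ← star_smul, ← hx, star_mulVec, vecMul_vecMul, hYD, vecMul_one]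
  calc star x ᵥ* D = (μ * star μ) • (star x ᵥ* D) := by rw [mul_comm, hμ, one_smul]
    _ = μ • star x := by rw [mul_smul, h]

lemma sympForm_sub_smul_mulVec {Y D : Matrix l l ℂ} (S : Matrix l l ℂ) (hYD : Yᴴ * D = 1)
    {μ : ℂ} (hμ : star μ * μ = 1) {v : l ⊕ l → ℂ}
    (hv : Y *ᵥ (v ∘ Sum.inl) = μ • (v ∘ Sum.inl)) :
    sympForm v ((lowerBlock Y D S - μ • 1) *ᵥ v) =
      μ * (star (v ∘ Sum.inl) ⬝ᵥ ((1 + S) *ᵥ (v ∘ Sum.inl))) := by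
  obtain ⟨x, y, rfl⟩ : ∃ x y, v = Sum.elim x y := ⟨_, _, (Sum.elim_comp_inl_inr v).symm⟩
  simp only [Sum.elim_comp_inl] at hv ⊢
  have hD : ∀ z, star x ⬝ᵥ (D *ᵥ z) = μ * (star x ⬝ᵥ z) := fun z => by
    rw [dotProduct_mulVec, star_vecMul_eq_smul_star hYD hμ hv, smul_dotProduct, smul_eq_mul]
  have hA : (lowerBlock Y D S - μ • 1) *ᵥ Sum.elim x y =
      Sum.elim (0 : l → ℂ) (D *ᵥ y - μ • y - (D + S * Y) *ᵥ x) := by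
    ext (i | i) <;>
      simp only [lowerBlock, neg_add_rev, sub_mulVec, fromBlocks_mulVec, Sum.elim_comp_inl, hv,
        Sum.elim_comp_inr, zero_mulVec, add_zero, add_mulVec, neg_mulVec, smul_mulVec, one_mulVec,
        Pi.sub_apply, Sum.elim_inl, Sum.elim_inr, Pi.add_apply, Pi.neg_apply, Pi.smul_apply,
        smul_eq_mul, sub_self, Pi.zero_apply]
    ring
  have hJ : ∀ z : l → ℂ, J l ℂ *ᵥ Sum.elim 0 z = Sum.elim (-z) 0 := fun z => by
    ext (i | i) <;> simp [J, fromBlocks_mulVec, neg_mulVec]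
  have hs : star (Sum.elim x y) = Sum.elim (star x) (star y) := by ext (i | i) <;> rfl
  rw [sympForm, hA, hJ, hs, sumElim_dotProduct_sumElim]
  simp only [add_mulVec, ← mulVec_mulVec, hv, mulVec_smul, neg_sub, dotProduct_sub, dotProduct_add,
    hD, dotProduct_smul, smul_eq_mul, sub_self, sub_zero, dotProduct_zero, add_zero, one_mulVec]
  ring

end Krein

section Intertwining

variable {l : Type*} [Fintype l] [DecidableEq l] {Ya Da Sa Yb Db Sb : Matrix l l ℂ}
  {H : Matrix (l ⊕ l) (l ⊕ l) ℂ} {μ : ℂ}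

lemma inl_eq_zero_of_pow_succ_mulVec_eq_zero (hYDa : Yaᴴ * Da = 1) (hYDb : Ybᴴ * Db = 1)
    (hSa : Sa.PosSemidef) (hSb : Sb.PosSemidef) (hH : Hᴴ * J l ℂ * H = -J l ℂ)
    (hint : H * lowerBlock Yb Db Sb = lowerBlock Ya Da Sa * H) (hμ : star μ * μ = 1) {k : ℕ}
    (iha : ∀ w, (lowerBlock Ya Da Sa - μ • 1) ^ k *ᵥ w = 0 → w ∘ Sum.inl = 0)
    (ihb : ∀ v, (lowerBlock Yb Db Sb - μ • 1) ^ k *ᵥ v = 0 → v ∘ Sum.inl = 0)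
    {v : l ⊕ l → ℂ} (hv : (lowerBlock Yb Db Sb - μ • 1) ^ (k + 1) *ᵥ v = 0) :
    v ∘ Sum.inl = 0 := by
  set w := H *ᵥ v
  have hsemi : SemiconjBy H (lowerBlock Yb Db Sb - μ • 1) (lowerBlock Ya Da Sa - μ • 1) := by
    simp only [SemiconjBy, Matrix.mul_sub, Matrix.sub_mul, hint, Matrix.mul_smul, Matrix.smul_mul,
      Matrix.mul_one, Matrix.one_mul]
  have hw : (lowerBlock Ya Da Sa - μ • 1) ^ (k + 1) *ᵥ w = 0 := by
    rw [mulVec_mulVec, ← (hsemi.pow_right _).eq, ← mulVec_mulVec, hv, mulVec_zero]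
  have hPa := PosDef.one.add_posSemidef hSa
  have hPb := PosDef.one.add_posSemidef hSb
  have hsum : star (w ∘ Sum.inl) ⬝ᵥ ((1 + Sa) *ᵥ (w ∘ Sum.inl)) +
      star (v ∘ Sum.inl) ⬝ᵥ ((1 + Sb) *ᵥ (v ∘ Sum.inl)) = 0 := by
    have hxw := mulVec_inl_eq_smul_of_pow_succ_mulVec_eq_zero iha hw
    have hxv := mulVec_inl_eq_smul_of_pow_succ_mulVec_eq_zero ihb hv
    -- evaluate both sides of `ω(H v, H (B - μ) v) = -ω(v, (B - μ) v)` by the Krein identity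
    have h := sympForm_mulVec_mulVec hH v ((lowerBlock Yb Db Sb - μ • 1) *ᵥ v)
    rw [mulVec_mulVec (M := H), hsemi.eq, ← mulVec_mulVec, sympForm_sub_smul_mulVec Sa hYDa hμ hxw,
      sympForm_sub_smul_mulVec Sb hYDb hμ hxv] at h
    refine (mul_eq_zero.mp (?_ : μ * _ = 0)).resolve_left (right_ne_zero_of_mul_eq_one hμ)
    linear_combination h
  obtain ⟨-, hQ⟩ := (add_eq_zero_iff_of_nonneg (hPa.posSemidef.dotProduct_mulVec_nonneg _)
    (hPb.posSemidef.dotProduct_mulVec_nonneg _)).mp hsum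
  by_contra hx
  exact (hPb.dotProduct_mulVec_pos hx).ne' hQ

theorem inl_eq_zero_of_pow_mulVec_eq_zero (hYDa : Yaᴴ * Da = 1) (hYDb : Ybᴴ * Db = 1)
    (hSa : Sa.PosSemidef) (hSb : Sb.PosSemidef) (hHu : IsUnit H) (hH : Hᴴ * J l ℂ * H = -J l ℂ)
    (hint : H * lowerBlock Yb Db Sb = lowerBlock Ya Da Sa * H) (hμ : star μ * μ = 1) (k : ℕ) :
    (∀ w, (lowerBlock Ya Da Sa - μ • 1) ^ k *ᵥ w = 0 → w ∘ Sum.inl = 0) ∧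
      (∀ v, (lowerBlock Yb Db Sb - μ • 1) ^ k *ᵥ v = 0 → v ∘ Sum.inl = 0) := by
  have hHH : H * H⁻¹ = 1 := mul_nonsing_inv _ ((isUnit_iff_isUnit_det H).mp hHu)
  have hH' : H⁻¹ᴴ * J l ℂ * H⁻¹ = -J l ℂ :=
    calc H⁻¹ᴴ * J l ℂ * H⁻¹ = -(H⁻¹ᴴ * (Hᴴ * J l ℂ * H) * H⁻¹) := by rw [hH]; noncomm_ring
      _ = -((H * H⁻¹)ᴴ * J l ℂ * (H * H⁻¹)) := by rw [conjTranspose_mul]; noncomm_ring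
      _ = -J l ℂ := by rw [hHH, conjTranspose_one, Matrix.one_mul, Matrix.mul_one]
  have hint' : H⁻¹ * lowerBlock Ya Da Sa = lowerBlock Yb Db Sb * H⁻¹ := by
    have := SemiconjBy.units_inv_symm_left (a := hHu.unit) hint
    rwa [coe_units_inv, IsUnit.unit_spec] at this
  induction k with
  | zero => simp
  | succ k ih =>
    exact ⟨fun _ => inl_eq_zero_of_pow_succ_mulVec_eq_zero hYDb hYDa hSb hSa hH' hint' hμ ih.2 ih.1,
      fun _ => inl_eq_zero_of_pow_succ_mulVec_eq_zero hYDa hYDb hSa hSb hH hint hμ ih.1 ih.2⟩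

theorem not_exists_antisymplectic_intertwiner (hYDa : Yaᴴ * Da = 1) (hYDb : Ybᴴ * Db = 1)
    (hSa : Sa.PosSemidef) (hSb : Sb.PosSemidef) (hμ : ‖μ‖ = 1) {x : l → ℂ} (hx : x ≠ 0)
    (heig : Ya *ᵥ x = μ • x ∨ Yb *ᵥ x = μ • x) :
    ¬ ∃ H : Matrix (l ⊕ l) (l ⊕ l) ℂ, IsUnit H ∧ Hᴴ * J l ℂ * H = -J l ℂ ∧
      H * lowerBlock Yb Db Sb = lowerBlock Ya Da Sa * H := by
  rintro ⟨H, hHu, hH, hint⟩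
  have hμ' : star μ * μ = 1 := by rw [RCLike.star_def, Complex.conj_mul', hμ]; norm_num
  have hgen := inl_eq_zero_of_pow_mulVec_eq_zero hYDa hYDb hSa hSb hHu hH hint hμ'
  rcases heig with h | h
  · obtain ⟨k, v, hv, hne⟩ :=
      exists_pow_sub_smul_mulVec_eq_zero_and_inl_ne_zero (-(Da + Sa * Ya)) Da hx h
    exact hne ((hgen k).1 v hv)
  · obtain ⟨k, v, hv, hne⟩ :=
      exists_pow_sub_smul_mulVec_eq_zero_and_inl_ne_zero (-(Db + Sb * Yb)) Db hx h
    exact hne ((hgen k).2 v hv)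

end Intertwining

section RealToComplex

variable {l : Type*} [Fintype l]

lemma posSemidef_map_ofReal {S : Matrix l l ℝ} (hS : S.PosSemidef) :
    (S.map (algebraMap ℝ ℂ)).PosSemidef := by
  obtain ⟨k, v, rfl⟩ := posSemidef_iff_eq_sum_vecMulVec.mp hS
  refine posSemidef_iff_eq_sum_vecMulVec.mpr ⟨k, fun i j => (v i j : ℂ), ?_⟩
  ext a b
  simp [Matrix.sum_apply, vecMulVec_apply]

lemma conjTranspose_map_ofReal {m n : Type*} (M : Matrix m n ℝ) :
    (M.map (algebraMap ℝ ℂ))ᴴ = Mᵀ.map (algebraMap ℝ ℂ) := by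
  ext
  simp

lemma lowerBlock_map {R R' : Type*} [CommRing R] [CommRing R'] (f : R →+* R')
    (Y D S : Matrix l l R) :
    (lowerBlock Y D S).map f = lowerBlock (Y.map f) (D.map f) (S.map f) := by
  simp only [lowerBlock, fromBlocks_map, Matrix.map_zero _ f.map_zero,
    Matrix.map_neg _ (map_neg f), Matrix.map_add _ (map_add f), Matrix.map_mul]

variable [DecidableEq l]

theorem not_exists_real_antisymplectic_intertwiner {Ya Da Sa Yb Db Sb : Matrix l l ℝ}
    (hYDa : Yaᵀ * Da = 1) (hYDb : Ybᵀ * Db = 1) (hSa : Sa.PosSemidef) (hSb : Sb.PosSemidef)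
    (heig : ∃ μ : ℂ, ‖μ‖ = 1 ∧ ∃ x ≠ 0,
      Ya.map (algebraMap ℝ ℂ) *ᵥ x = μ • x ∨ Yb.map (algebraMap ℝ ℂ) *ᵥ x = μ • x) :
    ¬ ∃ H : Matrix (l ⊕ l) (l ⊕ l) ℝ, IsUnit H ∧ Hᵀ * J l ℝ * H = -J l ℝ ∧
      H * lowerBlock Yb Db Sb = lowerBlock Ya Da Sa * H := by
  rintro ⟨H, hHu, hH, hint⟩
  obtain ⟨μ, hμ, x, hx, heig⟩ := heig
  set φ := algebraMap ℝ ℂ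
  have hYD {Y D : Matrix l l ℝ} (h : Yᵀ * D = 1) : (Y.map φ)ᴴ * D.map φ = 1 := by
    rw [conjTranspose_map_ofReal, ← Matrix.map_mul, h, Matrix.map_one _ φ.map_zero φ.map_one]
  refine not_exists_antisymplectic_intertwiner (hYD hYDa) (hYD hYDb) (posSemidef_map_ofReal hSa)
    (posSemidef_map_ofReal hSb) hμ hx heig ⟨H.map φ, by simpa using hHu.map φ.mapMatrix, ?_, ?_⟩
  · rw [conjTranspose_map_ofReal, ← map_J l φ, ← Matrix.map_mul, ← Matrix.map_mul, hH,
      Matrix.map_neg _ (map_neg φ)]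
  · rw [← lowerBlock_map, ← lowerBlock_map, ← Matrix.map_mul, ← Matrix.map_mul, hint]

end RealToComplex

section Symplectic

variable {l R : Type*} [Fintype l] [DecidableEq l] [CommRing R]

lemma Jmat_eq_neg_J (n : ℕ) : Jmat n = -J (Fin n) ℝ := by
  simp [Jmat, J, fromBlocks_neg]

lemma isSymplectic_iff_mem_symplecticGroup {n : ℕ}
    {g : Matrix (Fin n ⊕ Fin n) (Fin n ⊕ Fin n) ℝ} :
    IsSymplectic g ↔ g ∈ symplecticGroup (Fin n) ℝ := by
  rw [IsSymplectic, Jmat_eq_neg_J, SymplecticGroup.mem_iff', Matrix.mul_neg, Matrix.neg_mul,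
    neg_inj]

lemma inv_fromBlocks_of_mem_symplecticGroup {A B C D : Matrix l l R}
    (h : fromBlocks A B C D ∈ symplecticGroup l R) :
    (fromBlocks A B C D)⁻¹ = fromBlocks Dᵀ (-Bᵀ) (-Cᵀ) Aᵀ := by
  rw [SymplecticGroup.inv_eq_symplectic_inv _ h]
  simp [J, fromBlocks_transpose, fromBlocks_multiply, fromBlocks_neg]

def swapBlocks (l R : Type*) [DecidableEq l] [CommRing R] : Matrix (l ⊕ l) (l ⊕ l) R :=
  fromBlocks 0 1 1 0

lemma swapBlocks_mul_fromBlocks_mul_swapBlocks (A B C D : Matrix l l R) :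
    swapBlocks l R * fromBlocks A B C D * swapBlocks l R = fromBlocks D C B A := by
  simp [swapBlocks, fromBlocks_multiply]

lemma swapBlocks_mul_swapBlocks : swapBlocks l R * swapBlocks l R = 1 := by
  simpa using swapBlocks_mul_fromBlocks_mul_swapBlocks (R := R) (1 : Matrix l l R) 0 0 1

lemma swapBlocks_transpose_mul_J_mul_swapBlocks :
    (swapBlocks l R)ᵀ * J l R * swapBlocks l R = -J l R := by
  have hT : (swapBlocks l R)ᵀ = swapBlocks l R := by simp [swapBlocks, fromBlocks_transpose]
  rw [hT, J, swapBlocks_mul_fromBlocks_mul_swapBlocks, fromBlocks_neg]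
  simp

lemma exists_antisymplectic_intertwiner {g a b : Matrix (l ⊕ l) (l ⊕ l) R}
    (hg : g ∈ symplecticGroup l R) (hgab : g * b * g⁻¹ = a) :
    ∃ H : Matrix (l ⊕ l) (l ⊕ l) R, IsUnit H ∧ Hᵀ * J l R * H = -J l R ∧
      H * (swapBlocks l R * b * swapBlocks l R) = a * H := by
  have hg₁ : g⁻¹ * g = 1 := nonsing_inv_mul g (SymplecticGroup.symplectic_det hg)
  set K := swapBlocks l R
  refine ⟨g * K, ?_, ?_, ?_⟩
  · exact ((isUnit_iff_isUnit_det g).mpr (SymplecticGroup.symplectic_det hg)).mul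
      ⟨⟨K, K, swapBlocks_mul_swapBlocks, swapBlocks_mul_swapBlocks⟩, rfl⟩
  · calc (g * K)ᵀ * J l R * (g * K) = Kᵀ * (gᵀ * J l R * g) * K := by
          rw [transpose_mul]; noncomm_ring
      _ = -J l R := by
          rw [SymplecticGroup.mem_iff'.mp hg, swapBlocks_transpose_mul_J_mul_swapBlocks]
  · calc g * K * (K * b * K) = g * (K * K) * b * K := by noncomm_ring
      _ = g * b * g⁻¹ * (g * K) := by
          rw [swapBlocks_mul_swapBlocks, Matrix.mul_one, ← Matrix.mul_assoc,
            Matrix.mul_assoc _ g⁻¹, hg₁, Matrix.mul_one]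
      _ = a * (g * K) := by rw [hgab]

lemma fromBlocks_lower_mem_symplecticGroup {X S : Matrix l l R} (hX : IsUnit X) (hS : Sᵀ = S) :
    fromBlocks X 0 (X + Xᵀ⁻¹ * S) Xᵀ⁻¹ ∈ symplecticGroup l R := by
  have := hX.invertible
  refine SymplecticGroup.fromBlocks_mem_iff.mpr ⟨?_, by simp, by simp⟩
  simp [Matrix.mul_add, Matrix.add_mul, ← Matrix.mul_assoc, hS, transpose_nonsing_inv]

lemma fromBlocks_upper_mem_symplecticGroup {X S : Matrix l l R} (hX : IsUnit X) (hS : Sᵀ = S) :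
    fromBlocks Xᵀ⁻¹ (-Xᵀ⁻¹ - S * X) 0 X ∈ symplecticGroup l R := by
  have := hX.invertible
  refine SymplecticGroup.fromBlocks_mem_iff.mpr ⟨by simp, ?_, by simp [transpose_nonsing_inv]⟩
  simp [Matrix.mul_sub, Matrix.sub_mul, ← Matrix.mul_assoc, hS, transpose_nonsing_inv]

lemma inv_fromBlocks_lower_eq_lowerBlock {X S : Matrix l l R} (hX : IsUnit X) (hS : Sᵀ = S) :
    (fromBlocks X 0 (X + Xᵀ⁻¹ * S) Xᵀ⁻¹)⁻¹ = lowerBlock X⁻¹ Xᵀ S := by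
  rw [inv_fromBlocks_of_mem_symplecticGroup (fromBlocks_lower_mem_symplecticGroup hX hS)]
  simp [lowerBlock, hS, transpose_nonsing_inv]

lemma swapBlocks_mul_fromBlocks_upper_mul_swapBlocks (X S : Matrix l l R) :
    swapBlocks l R * fromBlocks Xᵀ⁻¹ (-Xᵀ⁻¹ - S * X) 0 X * swapBlocks l R =
      lowerBlock X Xᵀ⁻¹ S := by
  rw [swapBlocks_mul_fromBlocks_mul_swapBlocks, lowerBlock, neg_add, sub_eq_add_neg]

end Symplectic

end Matrix

theorem stmt13_general (n : ℕ) (X Xb S Sb : Matrix (Fin n) (Fin n) ℝ)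
    (hX : IsUnit X) (hXb : IsUnit Xb)
    (hcrit : (∃ μ : ℂ, (X.map (algebraMap ℝ ℂ)).charpoly.IsRoot μ ∧ ‖μ‖ = 1) ∨
      (∃ μ : ℂ, (Xb.map (algebraMap ℝ ℂ)).charpoly.IsRoot μ ∧ ‖μ‖ = 1))
    (hS : S.PosDef) (hSb : Sb.PosDef) :
    let c := Matrix.fromBlocks X 0 (X + Xᵀ⁻¹ * S) Xᵀ⁻¹
    let cb := Matrix.fromBlocks Xbᵀ⁻¹ (-Xbᵀ⁻¹ - Sb * Xb) 0 Xb
    IsSymplectic c ∧ IsSymplectic cb ∧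
      ¬ ∃ g : Matrix (Fin n ⊕ Fin n) (Fin n ⊕ Fin n) ℝ,
          IsSymplectic g ∧ g * cb * g⁻¹ = c⁻¹ := by
  intro c cb
  have hSsym : Sᵀ = S := (conjTranspose_eq_transpose_of_trivial S).symm.trans hS.isHermitian
  have hSbsym : Sbᵀ = Sb := (conjTranspose_eq_transpose_of_trivial Sb).symm.trans hSb.isHermitian
  simp only [isSymplectic_iff_mem_symplecticGroup]
  refine ⟨fromBlocks_lower_mem_symplecticGroup hX hSsym,
    fromBlocks_upper_mem_symplecticGroup hXb hSbsym, ?_⟩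
  rintro ⟨g, hg, hgc⟩
  obtain ⟨H, hH⟩ := exists_antisymplectic_intertwiner hg hgc
  rw [swapBlocks_mul_fromBlocks_upper_mul_swapBlocks,
    show c⁻¹ = lowerBlock X⁻¹ Xᵀ S from inv_fromBlocks_lower_eq_lowerBlock hX hSsym] at hH
  have := hX.invertible
  have := hXb.invertible
  refine not_exists_real_antisymplectic_intertwiner (by simp [← transpose_mul]) (by simp)
    hS.posSemidef hSb.posSemidef ?_ ⟨H, hH⟩
  rcases hcrit with ⟨μ, hroot, hμ⟩ | ⟨μ, hroot, hμ⟩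
  · obtain ⟨x, hx, hXx⟩ := exists_mulVec_eq_smul_of_isRoot_charpoly hroot
    have hinv : (X⁻¹).map (algebraMap ℝ ℂ) * X.map (algebraMap ℝ ℂ) = 1 := by
      rw [← Matrix.map_mul, inv_mul_of_invertible, Matrix.map_one _ (map_zero _) (map_one _)]
    refine ⟨μ⁻¹, by rw [norm_inv, hμ, inv_one], x, hx, Or.inl ?_⟩
    exact mulVec_eq_inv_smul_of_mul_eq_one hinv (by rintro rfl; simp at hμ) hXx
  · obtain ⟨x, hx, hXx⟩ := exists_mulVec_eq_smul_of_isRoot_charpoly hroot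
    exact ⟨μ, hμ, x, hx, Or.inr hXx⟩

theorem stmt13 (n : ℕ) (X Xb S Sb : Matrix (Fin n) (Fin n) ℝ)
    (hX : IsUnit X) (hXb : IsUnit Xb)
    (hXr : ∀ μ : ℂ, (X.map (algebraMap ℝ ℂ)).charpoly.IsRoot μ → ‖μ‖ ≤ 1)
    (hXbr : ∀ μ : ℂ, (Xb.map (algebraMap ℝ ℂ)).charpoly.IsRoot μ → ‖μ‖ ≤ 1)
    (hcrit : (∃ μ : ℂ, (X.map (algebraMap ℝ ℂ)).charpoly.IsRoot μ ∧ ‖μ‖ = 1) ∨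
      (∃ μ : ℂ, (Xb.map (algebraMap ℝ ℂ)).charpoly.IsRoot μ ∧ ‖μ‖ = 1))
    (hS : S.PosDef) (hSb : Sb.PosDef) :
    let c := Matrix.fromBlocks X 0 (X + Xᵀ⁻¹ * S) Xᵀ⁻¹
    let cb := Matrix.fromBlocks Xbᵀ⁻¹ (-Xbᵀ⁻¹ - Sb * Xb) 0 Xb
    IsSymplectic c ∧ IsSymplectic cb ∧
      ¬ ∃ g : Matrix (Fin n ⊕ Fin n) (Fin n ⊕ Fin n) ℝ,
          IsSymplectic g ∧ g * cb * g⁻¹ = c⁻¹ :=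
  stmt13_general n X Xb S Sb hX hXb hcrit hS hSb
end

section
/- For n ≥ 1, let R̃ₙ := {(X₁, X₂, X₃) ∈ GL(n,ℝ)³ : X₃(X₂ᵀ)⁻¹X₁ is symmetric positive definite}, viewed as a topological subspace of triples of real n×n matrices. Then R̃ₙ has exactly four connected components, distinguished by the signs of the determinants of the Xᵢ: two triples (X₁, X₂, X₃) and (Y₁, Y₂, Y₃) in R̃ₙ lie in the same connected component if and only if sign(det Xᵢ) = sign(det Yᵢ) for i = 1, 2, 3, and all four possible sign patterns occur (note sign(det X₃) is determined by sign(det X₁) and sign(det X₂) since det X₃ · det X₂⁻¹ · det X₁ > 0). -/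
/-!
Put `S = X₃ (X₂ᵀ)⁻¹ X₁`. Then `X₃ = S X₁⁻¹ X₂ᵀ`, so `R̃ₙ` is the image of `GL × GL × PD` under
`(X₁, X₂, S) ↦ (X₁, X₂, S X₁⁻¹ X₂ᵀ)`, which is continuous there. `PD` is convex, so triples whose
first two entries are joined in `GL` are joined in `R̃ₙ`. Conversely each `det Xᵢ` is continuous
and nonzero on `R̃ₙ`, so its sign is constant on connected components.

It remains to show that `GL(n, ℝ)` has two path components. By induction over transvections and
invertible diagonal matrices, every invertible matrix is joined within `GL` to `1` or to the
reflection `diag(-1, 1, …, 1)`. A transvection shrinks to `1` along a segment. An invertible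
diagonal matrix is a product of one-entry diagonal matrices, each of which moves to `1` or to a
coordinate reflection. Any coordinate reflection turns into any other through Householder
reflections. Since the reflection squares to `1`, the matrices joined in this way are closed under
products.
-/

open Set

theorem pos_iff_pos_of_mem_connectedComponentIn {X : Type*} [TopologicalSpace X] {F : Set X}
    {f : X → ℝ} (hf : ContinuousOn f F) (hf0 : ∀ x ∈ F, f x ≠ 0) {x y : X}
    (hy : y ∈ connectedComponentIn F x) : 0 < f x ↔ 0 < f y := by
  have hx : x ∈ F := connectedComponentIn_nonempty_iff.mp ⟨y, hy⟩
  have hC : IsPreconnected (f '' connectedComponentIn F x) :=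
    isPreconnected_connectedComponentIn.image f (hf.mono (connectedComponentIn_subset F x))
  have h0 : (0 : ℝ) ∉ f '' connectedComponentIn F x := by
    rintro ⟨z, hz, hz0⟩
    exact hf0 z (connectedComponentIn_subset F x hz) hz0
  have side : ∀ a ∈ f '' connectedComponentIn F x, ∀ b ∈ f '' connectedComponentIn F x,
      0 < a → 0 < b := fun a ha b hb hpos =>
    not_le.mp fun hb0 => h0 (hC.Icc_subset hb ha ⟨hb0, hpos.le⟩)
  have hfx := mem_image_of_mem f (mem_connectedComponentIn hx)
  have hfy := mem_image_of_mem f hy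
  exact ⟨side _ hfx _ hfy, side _ hfy _ hfx⟩

theorem JoinedIn.mem_connectedComponentIn {X : Type*} [TopologicalSpace X] {F : Set X}
    {x y : X} (h : JoinedIn F x y) : y ∈ connectedComponentIn F x :=
  (isPathConnected_pathComponentIn h.source_mem).isConnected.isPreconnected
    |>.subset_connectedComponentIn (mem_pathComponentIn_self h.source_mem) pathComponentIn_subset h

theorem JoinedIn.mul_isUnit {M : Type*} [Monoid M] [TopologicalSpace M] [ContinuousMul M]
    {a b c d : M} (hab : JoinedIn {x | IsUnit x} a b) (hcd : JoinedIn {x | IsUnit x} c d) :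
    JoinedIn {x | IsUnit x} (a * c) (b * d) :=
  (hab.mul hcd).mono <| by
    rintro _ ⟨x, hx, y, hy, rfl⟩
    exact hx.mul hy

namespace Matrix

theorem convex_setOf_posDef {n : Type*} : Convex ℝ {S : Matrix n n ℝ | S.PosDef} := by
  intro S hS T hT a b ha hb hab
  rcases ha.eq_or_lt with rfl | ha
  · rw [zero_add] at hab
    simpa [hab] using hT
  · exact (hS.smul ha).add_posSemidef (hT.posSemidef.smul hb)

section DecidableEq

variable {ι : Type*} [DecidableEq ι]

def householder (v : ι → ℝ) : Matrix ι ι ℝ := 1 - (2 : ℝ) • vecMulVec v v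

theorem householder_single (i : ι) :
    householder (Pi.single i 1) = diagonal (Pi.mulSingle i (-1)) := by
  ext a b
  simp only [householder, sub_apply, smul_apply, vecMulVec_apply, Pi.single_apply, one_apply,
    diagonal_apply, Pi.mulSingle_apply, smul_eq_mul]
  split_ifs <;> simp_all; norm_num

variable [Fintype ι]

theorem isUnit_iff_det_ne_zero {A : Matrix ι ι ℝ} : IsUnit A ↔ A.det ≠ 0 := by
  rw [isUnit_iff_isUnit_det, isUnit_iff_ne_zero]

theorem det_diagonal_mulSingle (i : ι) (c : ℝ) : (diagonal (Pi.mulSingle i c)).det = c := by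
  rw [det_diagonal, Finset.prod_pi_mulSingle', if_pos (Finset.mem_univ i)]

theorem det_householder {v : ι → ℝ} (hv : v ⬝ᵥ v = 1) : (householder v).det = -1 := by
  rw [householder, sub_eq_add_neg, ← neg_smul, ← smul_vecMulVec, vecMulVec_eq Unit,
    det_one_add_replicateCol_mul_replicateRow, dotProduct_smul, hv]
  norm_num

theorem _root_.JoinedIn.det_pos_iff {A B : Matrix ι ι ℝ} (h : JoinedIn {A | IsUnit A} A B) :
    0 < A.det ↔ 0 < B.det :=
  pos_iff_pos_of_mem_connectedComponentIn continuous_id.matrix_det.continuousOn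
    (fun _ hA => isUnit_iff_det_ne_zero.mp hA) h.mem_connectedComponentIn

theorem joinedIn_diagonal_of_mul_pos {d d' : ι → ℝ} (h : ∀ i, 0 < d i * d' i) :
    JoinedIn {A | IsUnit A} (diagonal d) (diagonal d') := by
  refine JoinedIn.of_segment_subset ?_
  rintro _ ⟨a, b, ha, hb, hab, rfl⟩
  rw [mem_ofPred, isUnit_iff_det_ne_zero, ← diagonal_smul, ← diagonal_smul, diagonal_add,
    det_diagonal, Finset.prod_ne_zero_iff]
  intro i _
  have hd : 0 < d i * d i := mul_self_pos.mpr (left_ne_zero_of_mul (h i).ne')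
  have : 0 < a * (d i * d i) + b * (d i * d' i) := convex_Ioi (0 : ℝ) hd (h i) ha hb hab
  refine right_ne_zero_of_mul (a := d i) (ne_of_gt ?_)
  simp only [Pi.smul_apply, smul_eq_mul]
  linarith

theorem joinedIn_diagonal_mulSingle (i : ι) {c c' : ℝ} (h : 0 < c * c') :
    JoinedIn {A | IsUnit A} (diagonal (Pi.mulSingle i c)) (diagonal (Pi.mulSingle i c')) := by
  refine joinedIn_diagonal_of_mul_pos fun k => ?_
  rcases eq_or_ne k i with rfl | hk
  · simpa using h
  · simp [hk]

theorem joinedIn_transvection_one (t : TransvectionStruct ι ℝ) :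
    JoinedIn {A | IsUnit A} t.toMatrix 1 := by
  refine JoinedIn.of_segment_subset ?_
  rintro _ ⟨a, b, -, -, hab, rfl⟩
  have : a • t.toMatrix + b • 1 = transvection t.i t.j (a * t.c) := by
    rw [TransvectionStruct.toMatrix, transvection, transvection, smul_add, add_right_comm,
      ← add_smul, hab, one_smul, smul_single, smul_eq_mul]
  rw [mem_ofPred, this, isUnit_iff_det_ne_zero, det_transvection_of_ne _ _ t.hij]
  exact one_ne_zero

theorem joinedIn_householder_single {i j : ι} (hij : i ≠ j) :
    JoinedIn {A | IsUnit A} (householder (Pi.single i 1)) (householder (Pi.single j 1)) := by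
  set u : ℝ → ι → ℝ := fun t =>
    Real.cos (Real.pi / 2 * t) • Pi.single i 1 + Real.sin (Real.pi / 2 * t) • Pi.single j 1
  have hu : Continuous u := by fun_prop
  refine JoinedIn.ofLine (f := fun t => householder (u t)) ?_ (by simp [u]) (by simp [u]) ?_
  · exact (continuous_const.sub ((continuous_const (y := (2 : ℝ))).smul
      (hu.matrix_vecMulVec hu))).continuousOn
  · rintro _ ⟨t, -, rfl⟩
    have hunit : u t ⬝ᵥ u t = 1 := by simp [u, dotProduct_add, hij, hij.symm, ← sq]
    rw [mem_ofPred, isUnit_iff_det_ne_zero, det_householder hunit]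
    norm_num

theorem joinedIn_diagonal_mulSingle_neg_one (i j : ι) :
    JoinedIn {A | IsUnit A} (diagonal (Pi.mulSingle i (-1 : ℝ)))
      (diagonal (Pi.mulSingle j (-1))) := by
  rcases eq_or_ne i j with rfl | hij
  · exact JoinedIn.refl (isUnit_iff_det_ne_zero.mpr (by rw [det_diagonal_mulSingle]; norm_num))
  · simpa only [householder_single] using joinedIn_householder_single hij

def joinedToOneOrReflection (i₀ : ι) : Submonoid (Matrix ι ι ℝ) where
  carrier := {A | JoinedIn {A | IsUnit A} A 1 ∨
    JoinedIn {A | IsUnit A} A (diagonal (Pi.mulSingle i₀ (-1)))}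
  one_mem' := .inl (JoinedIn.refl isUnit_one)
  mul_mem' := by
    have hsq : diagonal (Pi.mulSingle i₀ (-1 : ℝ)) * diagonal (Pi.mulSingle i₀ (-1)) = 1 := by
      rw [diagonal_mul_diagonal, ← Pi.mul_def, ← Pi.mulSingle_mul, neg_one_mul, neg_neg,
        Pi.mulSingle_one]
      exact diagonal_one
    rintro A B (hA | hA) (hB | hB)
    · exact .inl (by simpa using hA.mul_isUnit hB)
    · exact .inr (by simpa using hA.mul_isUnit hB)
    · exact .inr (by simpa using hA.mul_isUnit hB)
    · exact .inl (hsq ▸ hA.mul_isUnit hB)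

theorem diagonal_mem_joinedToOneOrReflection (i₀ : ι) {d : ι → ℝ} (hd : ∀ i, d i ≠ 0) :
    diagonal d ∈ joinedToOneOrReflection i₀ := by
  change d ∈ (joinedToOneOrReflection i₀).comap (diagonalRingHom ι ℝ)
  rw [← Finset.univ_prod_mulSingle d]
  refine Submonoid.prod_mem _ fun i _ => ?_
  rcases (hd i).lt_or_gt with hneg | hpos
  · exact .inr ((joinedIn_diagonal_mulSingle i (c' := -1) (by linarith)).trans
      (joinedIn_diagonal_mulSingle_neg_one i i₀))
  · refine .inl ?_
    simpa using joinedIn_diagonal_mulSingle i (c' := 1) (by rwa [mul_one])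

theorem mem_joinedToOneOrReflection (i₀ : ι) {A : Matrix ι ι ℝ} (hA : IsUnit A) :
    A ∈ joinedToOneOrReflection i₀ :=
  diagonal_transvection_induction_of_det_ne_zero _ A (isUnit_iff_det_ne_zero.mp hA)
    (fun d hd => diagonal_mem_joinedToOneOrReflection i₀ fun i hi => hd (by
      rw [det_diagonal]; exact Finset.prod_eq_zero (Finset.mem_univ i) hi))
    (fun t => .inl (joinedIn_transvection_one t)) fun _ _ _ _ => Submonoid.mul_mem _

theorem joinedIn_of_det_pos_iff [Nonempty ι] {A B : Matrix ι ι ℝ} (hA : IsUnit A)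
    (hB : IsUnit B) (h : 0 < A.det ↔ 0 < B.det) : JoinedIn {A | IsUnit A} A B := by
  inhabit ι
  have hE : ¬0 < (diagonal (Pi.mulSingle (default : ι) (-1 : ℝ))).det := by
    rw [det_diagonal_mulSingle]; norm_num
  rcases mem_joinedToOneOrReflection default hA with hA' | hA' <;>
    rcases mem_joinedToOneOrReflection default hB with hB' | hB'
  · exact hA'.trans hB'.symm
  · exact absurd (hB'.det_pos_iff.mp (h.mp (hA'.det_pos_iff.mpr (by simp)))) hE
  · exact absurd (hA'.det_pos_iff.mp (h.mpr (hB'.det_pos_iff.mpr (by simp)))) hE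
  · exact hA'.trans hB'.symm

theorem exists_isUnit_det_pos_iff [Nonempty ι] (b : Bool) :
    ∃ A : Matrix ι ι ℝ, IsUnit A ∧ (0 < A.det ↔ b = true) := by
  inhabit ι
  cases b
  · refine ⟨diagonal (Pi.mulSingle default (-1)), ?_, ?_⟩
    · rw [isUnit_iff_det_ne_zero, det_diagonal_mulSingle]; norm_num
    · rw [det_diagonal_mulSingle]; norm_num
  · exact ⟨1, isUnit_one, by simp⟩

theorem continuousAt_inv_of_isUnit {A : Matrix ι ι ℝ} (hA : IsUnit A) :
    ContinuousAt Inv.inv A :=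
  continuousAt_matrix_inv A <| by
    rw [Ring.inverse_eq_inv']
    exact continuousAt_inv₀ (isUnit_iff_det_ne_zero.mp hA)

end DecidableEq

end Matrix

open Matrix

def posDefTriples (ι : Type*) [Fintype ι] [DecidableEq ι] :
    Set (Matrix ι ι ℝ × Matrix ι ι ℝ × Matrix ι ι ℝ) :=
  {p | IsUnit p.1 ∧ IsUnit p.2.1 ∧ IsUnit p.2.2 ∧ (p.2.2 * p.2.1ᵀ⁻¹ * p.1).PosDef}

section posDefTriples

variable {ι : Type*} [Fintype ι] [DecidableEq ι]

theorem mk_mem_posDefTriples {X₁ X₂ S : Matrix ι ι ℝ} (h₁ : IsUnit X₁) (h₂ : IsUnit X₂)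
    (hS : S.PosDef) : (X₁, X₂, S * X₁⁻¹ * X₂ᵀ) ∈ posDefTriples ι := by
  have h₁' : IsUnit X₁.det := (isUnit_iff_isUnit_det X₁).mp h₁
  have h₂' : IsUnit X₂ᵀ.det := by rw [det_transpose]; exact (isUnit_iff_isUnit_det X₂).mp h₂
  refine ⟨h₁, h₂, (hS.isUnit.mul (isUnit_nonsing_inv_iff.mpr h₁)).mul
    ((isUnit_transpose X₂).mpr h₂), ?_⟩
  rwa [mul_nonsing_inv_cancel_right _ _ h₂', nonsing_inv_mul_cancel_right _ _ h₁']

theorem mk_posDefTriples_eq {p : Matrix ι ι ℝ × Matrix ι ι ℝ × Matrix ι ι ℝ}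
    (hp : p ∈ posDefTriples ι) : (p.1, p.2.1, p.2.2 * p.2.1ᵀ⁻¹ * p.1 * p.1⁻¹ * p.2.1ᵀ) = p := by
  have h₁ : IsUnit p.1.det := (isUnit_iff_isUnit_det _).mp hp.1
  have h₂ : IsUnit p.2.1ᵀ.det := by rw [det_transpose]; exact (isUnit_iff_isUnit_det _).mp hp.2.1
  rw [mul_nonsing_inv_cancel_right _ _ h₁, nonsing_inv_mul_cancel_right _ _ h₂]

theorem joinedIn_posDefTriples {p q : Matrix ι ι ℝ × Matrix ι ι ℝ × Matrix ι ι ℝ}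
    (hp : p ∈ posDefTriples ι) (hq : q ∈ posDefTriples ι)
    (h₁ : JoinedIn {A | IsUnit A} p.1 q.1) (h₂ : JoinedIn {A | IsUnit A} p.2.1 q.2.1) :
    JoinedIn (posDefTriples ι) p q := by
  set Φ := fun x : Matrix ι ι ℝ × Matrix ι ι ℝ × Matrix ι ι ℝ =>
    (x.1, x.2.1, x.2.2 * x.1⁻¹ * x.2.1ᵀ)
  have hΦ : ContinuousOn Φ ({A | IsUnit A} ×ˢ {A | IsUnit A} ×ˢ {S | S.PosDef}) := by
    intro x hx
    refine ContinuousAt.continuousWithinAt ?_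
    exact continuousAt_fst.prodMk (continuousAt_snd.fst.prodMk
      ((continuousAt_snd.snd.mul ((continuousAt_inv_of_isUnit hx.1).comp continuousAt_fst)).mul
        continuous_snd.fst.matrix_transpose.continuousAt))
  have hS := JoinedIn.of_segment_subset (convex_setOf_posDef.segment_subset hp.2.2.2 hq.2.2.2)
  have := (h₁.prod (h₂.prod hS)).map_continuousOn hΦ
  simp only [Φ, mk_posDefTriples_eq hp, mk_posDefTriples_eq hq] at this
  exact this.mono (image_subset_iff.mpr fun x hx => mk_mem_posDefTriples hx.1 hx.2.1 hx.2.2)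

theorem det_pos_iff_of_mem_connectedComponentIn_posDefTriples
    {p q : Matrix ι ι ℝ × Matrix ι ι ℝ × Matrix ι ι ℝ}
    (h : q ∈ connectedComponentIn (posDefTriples ι) p) :
    (0 < p.1.det ↔ 0 < q.1.det) ∧ (0 < p.2.1.det ↔ 0 < q.2.1.det) ∧
      (0 < p.2.2.det ↔ 0 < q.2.2.det) := by
  have det_sign : ∀ f : Matrix ι ι ℝ × Matrix ι ι ℝ × Matrix ι ι ℝ → Matrix ι ι ℝ,
      Continuous f → (∀ x ∈ posDefTriples ι, IsUnit (f x)) → (0 < (f p).det ↔ 0 < (f q).det) :=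
    fun f hf hu => pos_iff_pos_of_mem_connectedComponentIn hf.matrix_det.continuousOn
      (fun x hx => isUnit_iff_det_ne_zero.mp (hu x hx)) h
  exact ⟨det_sign _ continuous_fst fun _ hx => hx.1,
    det_sign _ continuous_snd.fst fun _ hx => hx.2.1,
    det_sign _ continuous_snd.snd fun _ hx => hx.2.2.1⟩

end posDefTriples

theorem stmt16 (n : ℕ) (hn : 1 ≤ n) :
    let M := Matrix (Fin n) (Fin n) ℝ
    let Rt : Set (M × M × M) :=
      {p | IsUnit p.1 ∧ IsUnit p.2.1 ∧ IsUnit p.2.2 ∧ (p.2.2 * p.2.1ᵀ⁻¹ * p.1).PosDef}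
    (∀ p ∈ Rt, ∀ q ∈ Rt,
      (q ∈ connectedComponentIn Rt p ↔
        ((0 < p.1.det ↔ 0 < q.1.det) ∧ (0 < p.2.1.det ↔ 0 < q.2.1.det) ∧
          (0 < p.2.2.det ↔ 0 < q.2.2.det)))) ∧
    (∀ b₁ b₂ : Bool, ∃ p ∈ Rt,
      ((0 < p.1.det) ↔ b₁ = true) ∧ ((0 < p.2.1.det) ↔ b₂ = true)) := by
  intro M Rt
  have : Nonempty (Fin n) := ⟨⟨0, hn⟩⟩
  refine ⟨fun p hp q hq => ⟨det_pos_iff_of_mem_connectedComponentIn_posDefTriples,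
    fun ⟨h₁, h₂, _⟩ => ?_⟩, fun b₁ b₂ => ?_⟩
  · exact (joinedIn_posDefTriples hp hq (joinedIn_of_det_pos_iff hp.1 hq.1 h₁)
      (joinedIn_of_det_pos_iff hp.2.1 hq.2.1 h₂)).mem_connectedComponentIn
  · obtain ⟨A, hA, hA₁⟩ := exists_isUnit_det_pos_iff (ι := Fin n) b₁
    obtain ⟨B, hB, hB₂⟩ := exists_isUnit_det_pos_iff (ι := Fin n) b₂
    exact ⟨(A, B, 1 * A⁻¹ * Bᵀ), mk_mem_posDefTriples hA hB PosDef.one, hA₁, hB₂⟩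
end

section
/- Let B := {X ∈ GL(n,ℝ) : X is contracting}. Let X₁, X₂, X₃ ∈ B be such that X₃(X₂ᵀ)⁻¹X₁ is symmetric positive definite, and let X₂(·), X₃(·) : [0,1] → B be continuous paths with X₂(0) = X₂ and X₃(0) = X₃. Then there exists a continuous path X₁(·) : [0,1] → B with X₁(0) = X₁ such that X₃(t)(X₂(t)ᵀ)⁻¹X₁(t) is symmetric positive definite for every t ∈ [0,1]. -/
/-!
With `P = X₃ X₂ᵀ⁻¹ X₁`, the path `M t = X₂(t)ᵀ X₃(t)⁻¹ P` starts at `X₁` and satisfies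
`X₃(t) X₂(t)ᵀ⁻¹ M(t) = P`, but need not stay contracting. Rescaling by a continuous `c(t) > 0`
only turns `P` into `c(t) P`, which is still positive definite. Contracting matrices form an open
set (by Gelfand's formula some power of `X₁` has norm `< 1`, and this persists nearby), so `M t`
is contracting for `t < ε`; then `c t = (1 + min 1 (t / ε) * ‖M t‖)⁻¹` works: it equals `1` at
`0`, is at most `1`, and gives `‖c t • M t‖ < 1` for `t ≥ ε`.
-/

open Matrix

open Filter

namespace spectrum

theorem norm_lt_one_of_mem_smul {𝕜 A : Type*} [NormedField 𝕜] [Ring A] [Algebra 𝕜 A] {a : A}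
    (ha : ∀ μ ∈ spectrum 𝕜 a, ‖μ‖ < 1) {c : 𝕜} (hc₀ : c ≠ 0) (hc : ‖c‖ ≤ 1) {μ : 𝕜}
    (hμ : μ ∈ spectrum 𝕜 (c • a)) : ‖μ‖ < 1 := by
  rw [show c • a = Units.mk0 c hc₀ • a from rfl, unit_smul_eq_smul] at hμ
  obtain ⟨ν, hν, rfl⟩ := hμ
  calc ‖Units.mk0 c hc₀ • ν‖ = ‖c‖ * ‖ν‖ := norm_smul c ν
    _ ≤ ‖ν‖ := mul_le_of_le_one_left (norm_nonneg ν) hc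
    _ < 1 := ha ν hν

theorem norm_lt_one_of_norm_pow_lt_one {𝕜 A : Type*} [NontriviallyNormedField 𝕜] [NormedRing A]
    [NormedAlgebra 𝕜 A] [CompleteSpace A] (h1 : ‖(1 : A)‖ ≤ 1) {a : A} {k : ℕ} (hk : k ≠ 0)
    (ha : ‖a ^ k‖ < 1) {μ : 𝕜} (hμ : μ ∈ spectrum 𝕜 a) : ‖μ‖ < 1 := by
  have hμk : ‖μ‖ ^ k < 1 := calc
    ‖μ‖ ^ k = ‖μ ^ k‖ := (norm_pow μ k).symm
    _ ≤ ‖a ^ k‖ * ‖(1 : A)‖ := norm_le_norm_mul_of_mem (pow_mem_pow a k hμ)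
    _ ≤ ‖a ^ k‖ := mul_le_of_le_one_right (norm_nonneg _) h1
    _ < 1 := ha
  exact (pow_lt_one_iff_of_nonneg (norm_nonneg μ) hk).mp hμk

variable {A : Type*} [NormedRing A] [NormedAlgebra ℂ A] [CompleteSpace A]

theorem exists_norm_pow_lt_one {a : A} (ha : ∀ μ ∈ spectrum ℂ a, ‖μ‖ < 1) :
    ∃ k ≠ 0, ‖a ^ k‖ < 1 := by
  have hρ : spectralRadius ℂ a < 1 := by
    rcases (spectrum ℂ a).eq_empty_or_nonempty with h | h
    · simp [spectralRadius, h]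
    · simpa using spectralRadius_lt_of_forall_lt_of_nonempty h (r := 1)
        fun μ hμ => by simpa [← NNReal.coe_lt_coe] using ha μ hμ
  -- Gelfand's formula
  obtain ⟨k, hk, hk0⟩ := ((pow_nnnorm_pow_one_div_tendsto_nhds_spectralRadius a).eventually
    (gt_mem_nhds hρ) |>.and (eventually_ne_atTop 0)).exists
  refine ⟨k, hk0, ?_⟩
  have : (‖a ^ k‖₊ : ENNReal) < 1 :=
    lt_of_not_ge fun h => (ENNReal.one_le_rpow h (by positivity)).not_gt hk
  exact_mod_cast this

theorem isOpen_setOf_forall_norm_lt_one (h1 : ‖(1 : A)‖ ≤ 1) :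
    IsOpen {a : A | ∀ μ ∈ spectrum ℂ a, ‖μ‖ < 1} := by
  refine isOpen_iff_mem_nhds.mpr fun a ha => ?_
  obtain ⟨k, hk0, hk⟩ := exists_norm_pow_lt_one ha
  filter_upwards [((continuous_pow k).norm.tendsto a).eventually_lt_const hk] with b hb
  exact fun μ hμ => norm_lt_one_of_norm_pow_lt_one h1 hk0 hb hμ

theorem exists_continuous_smul_forall_norm_lt_one {X : Type*} [PseudoMetricSpace X]
    (h1 : ‖(1 : A)‖ ≤ 1) {f : X → A} (hf : Continuous f) {x₀ : X}
    (h₀ : ∀ μ ∈ spectrum ℂ (f x₀), ‖μ‖ < 1) :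
    ∃ c : X → ℝ, Continuous c ∧ c x₀ = 1 ∧
      ∀ x, 0 < c x ∧ ∀ μ ∈ spectrum ℂ ((c x : ℂ) • f x), ‖μ‖ < 1 := by
  obtain ⟨ε, hε, hnear⟩ := Metric.eventually_nhds_iff.mp
    (hf.continuousAt.eventually ((isOpen_setOf_forall_norm_lt_one h1).mem_nhds h₀))
  set s : X → ℝ := fun x => min 1 (dist x x₀ / ε)
  set c : X → ℝ := fun x => (1 + s x * ‖f x‖)⁻¹
  have hs : ∀ x, 0 ≤ s x := fun x => le_min zero_le_one (by positivity)
  have hden : ∀ x, 0 < 1 + s x * ‖f x‖ := fun x => by have := hs x; positivity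
  have hc : ∀ x, 0 < c x := fun x => inv_pos.mpr (hden x)
  have hnorm : ∀ x, ‖(c x : ℂ)‖ = c x := fun x => by
    rw [Complex.norm_real, Real.norm_of_nonneg (hc x).le]
  have hs_cont : Continuous s :=
    continuous_const.min ((continuous_id.dist continuous_const).div_const ε)
  refine ⟨c, (continuous_const.add (hs_cont.mul hf.norm)).inv₀ fun x => (hden x).ne',
    by simp [c, s], fun x => ⟨hc x, ?_⟩⟩
  rcases lt_or_ge (dist x x₀) ε with hx | hx
  · refine fun μ => norm_lt_one_of_mem_smul (hnear hx) (by exact_mod_cast (hc x).ne') ?_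
    rw [hnorm]
    exact inv_le_one_of_one_le₀ (le_add_of_nonneg_right (mul_nonneg (hs x) (norm_nonneg _)))
  · have hs1 : s x = 1 := min_eq_left ((one_le_div hε).mpr hx)
    refine fun μ => norm_lt_one_of_norm_pow_lt_one h1 one_ne_zero ?_
    rw [pow_one, norm_smul, hnorm, inv_mul_lt_iff₀ (hden x), hs1]
    linarith

end spectrum

section Contracting

attribute [local instance] Matrix.linftyOpNormedRing Matrix.linftyOpNormedAlgebra

variable {n : ℕ}

theorem contracting_iff_forall_mem_spectrum {A : Matrix (Fin n) (Fin n) ℝ} :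
    Contracting A ↔ ∀ μ ∈ spectrum ℂ (A.map (algebraMap ℝ ℂ)), ‖μ‖ < 1 := by
  simp only [Contracting, Matrix.mem_spectrum_iff_isRoot_charpoly]

theorem exists_continuous_smul_contracting {X : Type*} [PseudoMetricSpace X]
    {M : X → Matrix (Fin n) (Fin n) ℝ} (hM : Continuous M) {x₀ : X} (h₀ : Contracting (M x₀)) :
    ∃ c : X → ℝ, Continuous c ∧ c x₀ = 1 ∧ ∀ x, 0 < c x ∧ Contracting (c x • M x) := by
  have h1 : ‖(1 : Matrix (Fin n) (Fin n) ℂ)‖ ≤ 1 := by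
    rw [← diagonal_one, linfty_opNorm_diagonal]
    exact pi_norm_le_iff_of_nonneg zero_le_one |>.mpr fun _ => norm_one.le
  obtain ⟨c, hc, hc₀, hcM⟩ := spectrum.exists_continuous_smul_forall_norm_lt_one h1
    (hM.matrix_map (continuous_algebraMap ℝ ℂ)) (contracting_iff_forall_mem_spectrum.mp h₀)
  refine ⟨c, hc, hc₀, fun x => ⟨(hcM x).1, contracting_iff_forall_mem_spectrum.mpr ?_⟩⟩
  have : (c x • M x).map (algebraMap ℝ ℂ) = (c x : ℂ) • (M x).map (algebraMap ℝ ℂ) := by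
    ext i j; simp
  simpa only [this] using (hcM x).2

end Contracting

theorem Continuous.matrix_nonsing_inv {X ι 𝕜 : Type*} [TopologicalSpace X] [Fintype ι]
    [DecidableEq ι] [NormedField 𝕜] [CompleteSpace 𝕜] {A : X → Matrix ι ι 𝕜} (hA : Continuous A)
    (h : ∀ x, IsUnit (A x)) : Continuous fun x => (A x)⁻¹ :=
  continuous_iff_continuousAt.mpr fun x => (continuousAt_matrix_inv _
    (NormedRing.inverse_continuousAt ((isUnit_iff_isUnit_det _).mp (h x)).unit)).comp
      hA.continuousAt

theorem Matrix.mul_nonsing_inv_mul_mul_nonsing_inv_mul {ι α : Type*} [Fintype ι] [DecidableEq ι]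
    [CommRing α] {A B : Matrix ι ι α} (hA : IsUnit A) (hB : IsUnit B) (C : Matrix ι ι α) :
    A * B⁻¹ * (B * A⁻¹ * C) = C := by
  rw [isUnit_iff_isUnit_det] at hA hB
  simp only [Matrix.mul_assoc, nonsing_inv_mul_cancel_left _ _ hB,
    mul_nonsing_inv_cancel_left _ _ hA]

theorem stmt19_general (n : ℕ) (X₁ X₂ X₃ : Matrix (Fin n) (Fin n) ℝ)
    (h₁ : IsUnit X₁ ∧ Contracting X₁)
    (hpd : (X₃ * X₂ᵀ⁻¹ * X₁).PosDef)
    (X₂p X₃p : unitInterval → Matrix (Fin n) (Fin n) ℝ)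
    (hc₂ : Continuous X₂p) (hc₃ : Continuous X₃p)
    (hB₂ : ∀ t, IsUnit (X₂p t) ∧ Contracting (X₂p t))
    (hB₃ : ∀ t, IsUnit (X₃p t) ∧ Contracting (X₃p t))
    (h₂0 : X₂p 0 = X₂) (h₃0 : X₃p 0 = X₃) :
    ∃ X₁p : unitInterval → Matrix (Fin n) (Fin n) ℝ,
      Continuous X₁p ∧ X₁p 0 = X₁ ∧
      ∀ t, (IsUnit (X₁p t) ∧ Contracting (X₁p t)) ∧
        (X₃p t * (X₂p t)ᵀ⁻¹ * X₁p t).PosDef := by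
  set P := X₃ * X₂ᵀ⁻¹ * X₁
  set M : unitInterval → Matrix (Fin n) (Fin n) ℝ := fun t => (X₂p t)ᵀ * (X₃p t)⁻¹ * P
  have hX₂ : ∀ t, IsUnit (X₂p t)ᵀ := fun t => (isUnit_transpose _).mpr (hB₂ t).1
  have hsolve : ∀ t, X₃p t * (X₂p t)ᵀ⁻¹ * M t = P := fun t =>
    mul_nonsing_inv_mul_mul_nonsing_inv_mul (hB₃ t).1 (hX₂ t) P
  have hM₀ : M 0 = X₁ := by
    simpa only [M, h₂0, h₃0] using
      mul_nonsing_inv_mul_mul_nonsing_inv_mul (h₂0 ▸ hX₂ 0) (h₃0 ▸ (hB₃ 0).1) X₁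
  have hM : Continuous M :=
    (hc₂.matrix_transpose.matrix_mul (hc₃.matrix_nonsing_inv fun t => (hB₃ t).1)).matrix_mul
      continuous_const
  obtain ⟨c, hc, hc₀, hcM⟩ := exists_continuous_smul_contracting hM (hM₀ ▸ h₁.2)
  refine ⟨fun t => c t • M t, hc.smul hM, by simp [hc₀, hM₀], fun t => ⟨⟨?_, (hcM t).2⟩, ?_⟩⟩
  · exact IsUnit.smul (Units.mk0 (c t) (hcM t).1.ne')
      (((hX₂ t).mul ((isUnit_nonsing_inv_iff).mpr (hB₃ t).1)).mul hpd.isUnit)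
  · rw [Matrix.mul_smul, hsolve]
    exact hpd.smul (hcM t).1

theorem stmt19 (n : ℕ) (X₁ X₂ X₃ : Matrix (Fin n) (Fin n) ℝ)
    (h₁ : IsUnit X₁ ∧ Contracting X₁)
    (h₂ : IsUnit X₂ ∧ Contracting X₂)
    (h₃ : IsUnit X₃ ∧ Contracting X₃)
    (hpd : (X₃ * X₂ᵀ⁻¹ * X₁).PosDef)
    (X₂p X₃p : unitInterval → Matrix (Fin n) (Fin n) ℝ)
    (hc₂ : Continuous X₂p) (hc₃ : Continuous X₃p)
    (hB₂ : ∀ t, IsUnit (X₂p t) ∧ Contracting (X₂p t))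
    (hB₃ : ∀ t, IsUnit (X₃p t) ∧ Contracting (X₃p t))
    (h₂0 : X₂p 0 = X₂) (h₃0 : X₃p 0 = X₃) :
    ∃ X₁p : unitInterval → Matrix (Fin n) (Fin n) ℝ,
      Continuous X₁p ∧ X₁p 0 = X₁ ∧
      ∀ t, (IsUnit (X₁p t) ∧ Contracting (X₁p t)) ∧
        (X₃p t * (X₂p t)ᵀ⁻¹ * X₁p t).PosDef :=
  stmt19_general n X₁ X₂ X₃ h₁ hpd X₂p X₃p hc₂ hc₃ hB₂ hB₃ h₂0 h₃0
end
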